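/- arXiv:math/0108221 — 8 statements merged into one kernel-verified Lean document; each statement's English description precedes it below -/
import Mathlib

section
/- The Yangian R-matrix R(k) = (k·I + i·g·P)/(k + i·g) satisfies the additive Yang–Baxter equation R₁₂(k₁−k₂) R₁₃(k₁−k₃) R₂₃(k₂−k₃) = R₂₃(k₂−k₃) R₁₃(k₁−k₃) R₁₂(k₁−k₂) on ℂ^N ⊗ ℂ^N ⊗ ℂ^N. -/
open Matrix

/-- Operators on `ℂ^N ⊗ ℂ^N`. -/
abbrev TwoLeg (N : ℕ) (α : Type*) := Matrix (Fin N × Fin N) (Fin N × Fin N) α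

/-- Operators on `ℂ^N ⊗ ℂ^N ⊗ ℂ^N`. -/
abbrev ThreeLeg (N : ℕ) (α : Type*) :=
  Matrix (Fin N × Fin N × Fin N) (Fin N × Fin N × Fin N) α

/-- The permutation (flip) operator `P` on `ℂ^N ⊗ ℂ^N`. -/
def Pmat (N : ℕ) : TwoLeg N ℂ :=
  Matrix.of fun p q => if p.1 = q.2 ∧ p.2 = q.1 then 1 else 0

/-- The Yangian R-matrix `R(k) = (k·I + i g P)/(k + i g)`. -/
noncomputable def Ryang (N : ℕ) (g : ℝ) (k : ℂ) : TwoLeg N ℂ :=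
  (k + Complex.I * g)⁻¹ • (k • (1 : TwoLeg N ℂ) + (Complex.I * g) • Pmat N)

/-- Embed an operator on legs 1 and 2, acting as identity on leg 3. -/
def emb12 {N : ℕ} (M : TwoLeg N ℂ) : ThreeLeg N ℂ :=
  Matrix.of fun p q => M (p.1, p.2.1) (q.1, q.2.1) * (if p.2.2 = q.2.2 then 1 else 0)

/-- Embed an operator on legs 1 and 3, acting as identity on leg 2. -/
def emb13 {N : ℕ} (M : TwoLeg N ℂ) : ThreeLeg N ℂ :=
  Matrix.of fun p q => M (p.1, p.2.2) (q.1, q.2.2) * (if p.2.1 = q.2.1 then 1 else 0)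

/-- Embed an operator on legs 2 and 3, acting as identity on leg 1. -/
def emb23 {N : ℕ} (M : TwoLeg N ℂ) : ThreeLeg N ℂ :=
  Matrix.of fun p q => M (p.2.1, p.2.2) (q.2.1, q.2.2) * (if p.1 = q.1 then 1 else 0)

/-!
Up to the scalar `(k + i g)⁻¹`, which is the same on both sides of the equation, `R(k)` is
`k + i g P`. The embedded flips `P₁₂, P₁₃, P₂₃` are the permutation matrices of the three
transpositions of the tensor legs, so they obey the relations of transpositions in `S₃`;
expanding both sides, these relations give the Yang–Baxter identity for `u + a P`.
-/

section YangBaxter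

variable {K R : Type*} [CommRing K] [Ring R] [Algebra K R]

/-- The terms of degree two in `a` match because the middle coefficient is `u + w` and
`AB = BC = CA`, `BA = CB = AC`; in degree three both sides reduce to `B`. -/
theorem yangBaxter_of_transposition_relations {A B C : R} (hC : C * C = 1)
    (hAB : A * B = B * C) (hBC : B * C = C * A) (hBA : B * A = C * B) (hCB : C * B = A * C)
    (a u w : K) :
    (u • 1 + a • A) * ((u + w) • 1 + a • B) * (w • 1 + a • C) =
      (w • 1 + a • C) * ((u + w) • 1 + a • B) * (u • 1 + a • A) := by
  have hABC : A * B * C = B := by rw [hAB, mul_assoc, hC, mul_one]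
  have hCBA : C * B * A = B := by rw [mul_assoc, hBA, ← mul_assoc, hC, one_mul]
  simp only [mul_add, add_mul, smul_mul_assoc, mul_smul_comm, one_mul, mul_one]
  rw [hABC, hCBA, hAB, hBA, hBC, hCB]
  module

end YangBaxter

section LegSwaps

variable (α : Type*)

@[simps]
def legSwap12 : Equiv.Perm (α × α × α) where
  toFun p := (p.2.1, p.1, p.2.2)
  invFun p := (p.2.1, p.1, p.2.2)

@[simps]
def legSwap13 : Equiv.Perm (α × α × α) where
  toFun p := (p.2.2, p.2.1, p.1)
  invFun p := (p.2.2, p.2.1, p.1)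

@[simps]
def legSwap23 : Equiv.Perm (α × α × α) where
  toFun p := (p.1, p.2.2, p.2.1)
  invFun p := (p.1, p.2.2, p.2.1)

theorem legSwap23_mul_self : legSwap23 α * legSwap23 α = 1 := rfl

theorem legSwap13_mul_legSwap12 : legSwap13 α * legSwap12 α = legSwap23 α * legSwap13 α := rfl

theorem legSwap23_mul_legSwap13 : legSwap23 α * legSwap13 α = legSwap12 α * legSwap23 α := rfl

theorem legSwap12_mul_legSwap13 : legSwap12 α * legSwap13 α = legSwap13 α * legSwap23 α := rfl

theorem legSwap13_mul_legSwap23 : legSwap13 α * legSwap23 α = legSwap23 α * legSwap12 α := rfl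

end LegSwaps

section Embeddings

variable {N : ℕ}

theorem emb12_Pmat : emb12 (Pmat N) = (legSwap12 (Fin N)).permMatrix ℂ := by
  ext ⟨a, b, c⟩ ⟨d, e, f⟩
  by_cases h : c = f <;> simp [emb12, Pmat, PEquiv.toMatrix_apply, h, and_comm, eq_comm]

theorem emb13_Pmat : emb13 (Pmat N) = (legSwap13 (Fin N)).permMatrix ℂ := by
  ext ⟨a, b, c⟩ ⟨d, e, f⟩
  by_cases h : b = e <;> simp [emb13, Pmat, PEquiv.toMatrix_apply, h, and_comm, eq_comm]

theorem emb23_Pmat : emb23 (Pmat N) = (legSwap23 (Fin N)).permMatrix ℂ := by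
  ext ⟨a, b, c⟩ ⟨d, e, f⟩
  by_cases h : a = d <;> simp [emb23, Pmat, PEquiv.toMatrix_apply, h, and_comm, eq_comm]

theorem emb12_Ryang (g : ℝ) (k : ℂ) :
    emb12 (Ryang N g k) =
      (k + Complex.I * g)⁻¹ • (k • 1 + (Complex.I * g) • emb12 (Pmat N)) := by
  ext ⟨a, b, c⟩ ⟨d, e, f⟩
  by_cases h : c = f <;> simp [emb12, Ryang, one_apply, h]

theorem emb13_Ryang (g : ℝ) (k : ℂ) :
    emb13 (Ryang N g k) =
      (k + Complex.I * g)⁻¹ • (k • 1 + (Complex.I * g) • emb13 (Pmat N)) := by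
  ext ⟨a, b, c⟩ ⟨d, e, f⟩
  by_cases h : b = e <;> simp [emb13, Ryang, one_apply, h]

theorem emb23_Ryang (g : ℝ) (k : ℂ) :
    emb23 (Ryang N g k) =
      (k + Complex.I * g)⁻¹ • (k • 1 + (Complex.I * g) • emb23 (Pmat N)) := by
  ext ⟨a, b, c⟩ ⟨d, e, f⟩
  by_cases h : a = d <;> simp [emb23, Ryang, one_apply, h]

end Embeddings

theorem yangian_yang_baxter_general {N : ℕ} (g : ℝ) (k₁ k₂ k₃ : ℂ) :
    emb12 (Ryang N g (k₁ - k₂)) * emb13 (Ryang N g (k₁ - k₃)) *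
        emb23 (Ryang N g (k₂ - k₃)) =
      emb23 (Ryang N g (k₂ - k₃)) * emb13 (Ryang N g (k₁ - k₃)) *
        emb12 (Ryang N g (k₁ - k₂)) := by
  have hk : k₁ - k₃ = (k₁ - k₂) + (k₂ - k₃) := by ring
  simp only [emb12_Ryang, emb13_Ryang, emb23_Ryang, emb12_Pmat, emb13_Pmat, emb23_Pmat,
    smul_mul_smul_comm]
  rw [hk, yangBaxter_of_transposition_relations]
  · congr 1
    ring
  all_goals
    simp only [← Matrix.permMatrix_mul, legSwap23_mul_self, legSwap13_mul_legSwap12,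
      legSwap23_mul_legSwap13, legSwap12_mul_legSwap13, legSwap13_mul_legSwap23,
      Matrix.permMatrix_one]

/-- the Yangian R-matrix satisfies the additive Yang–Baxter equation
`R₁₂(k₁−k₂) R₁₃(k₁−k₃) R₂₃(k₂−k₃) = R₂₃(k₂−k₃) R₁₃(k₁−k₃) R₁₂(k₁−k₂)`. -/
theorem yangian_yang_baxter {N : ℕ} (g : ℝ) (k₁ k₂ k₃ : ℂ)
    (h12 : (k₁ - k₂) + Complex.I * g ≠ 0)
    (h13 : (k₁ - k₃) + Complex.I * g ≠ 0)
    (h23 : (k₂ - k₃) + Complex.I * g ≠ 0) :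
    emb12 (Ryang N g (k₁ - k₂)) * emb13 (Ryang N g (k₁ - k₃)) *
        emb23 (Ryang N g (k₂ - k₃)) =
      emb23 (Ryang N g (k₂ - k₃)) * emb13 (Ryang N g (k₁ - k₃)) *
        emb12 (Ryang N g (k₁ - k₂)) :=
  yangian_yang_baxter_general g k₁ k₂ k₃
end

section
/- Suppose in an associative algebra A, elements T₁, T₂, B₁, B₂ (matrices over A in auxiliary spaces 1 and 2) satisfy the RTT relation R₁₂ T₁ T₂ = T₂ T₁ R₁₂ for all spectral parameters, T has entries commuting with scalars, B₁, B₂ are scalar (central-entry) matrices satisfying the reflection equation R₁₂ B₁ R'₂₁ B₂ = B₂ R'₁₂ B₁ R̄₂₁, and all R-matrices are invertible with the unitarity relations R₁₂ R₂₁ = I, R̄₁₂ R̄₂₁ = I. Then b(k) := T(k) B(k) T(−k)⁻¹ satisfies the reflection equation R₁₂ b₁ R'₂₁ b₂ = b₂ R'₁₂ b₁ R̄₂₁. -/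
open Matrix

/-- Conjugation by the flip operator `P`: `flipM M = P ∘ M ∘ P`. -/
def flipM {N : ℕ} {α : Type*} (M : TwoLeg N α) : TwoLeg N α :=
  Matrix.of fun p q => M (p.2, p.1) (q.2, q.1)

/-- Embedding of an `N×N` matrix into auxiliary space 1: `M ↦ M ⊗ I`. -/
def leg1 {N : ℕ} {α : Type*} [MulZeroOneClass α] (M : Matrix (Fin N) (Fin N) α) :
    TwoLeg N α :=
  Matrix.of fun p q => if p.2 = q.2 then M p.1 q.1 else 0

/-- Embedding of an `N×N` matrix into auxiliary space 2: `M ↦ I ⊗ M`. -/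
def leg2 {N : ℕ} {α : Type*} [MulZeroOneClass α] (M : Matrix (Fin N) (Fin N) α) :
    TwoLeg N α :=
  Matrix.of fun p q => if p.1 = q.1 then M p.2 q.2 else 0

/-- Map a complex matrix to a matrix over the algebra `A`. -/
def cmap {N : ℕ} (A : Type*) [Ring A] [Algebra ℂ A] (M : TwoLeg N ℂ) : TwoLeg N A :=
  M.map (algebraMap ℂ A)

/-- The reflection operator `b(k) = T(k) B(k) T(−k)⁻¹`. -/
def bop {N : ℕ} {A : Type*} [Ring A] [Algebra ℂ A]
    (T Tinv : ℝ → Matrix (Fin N) (Fin N) A) (B : ℝ → Matrix (Fin N) (Fin N) ℂ)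
    (k : ℝ) : Matrix (Fin N) (Fin N) A :=
  T k * (B k).map (algebraMap ℂ A) * Tinv (-k)

/-!
Substituting `b(k) = T(k) B(k) T(−k)⁻¹`, the inverse factors `T(−k)⁻¹` are carried across the
`R`-matrices by the RTT relation at sign-flipped spectral parameters (conjugated by the flip when
the spaces appear in the order `2, 1`), and the scalar matrices `B` commute with every entry of `T`.
After this reshuffling only `R₁₂ T₁ T₂ = T₂ T₁ R₁₂` and the reflection equation for `B` remain.
-/

theorem Units.inv_mul_mul_eq_mul_mul_inv {M : Type*} [Monoid M] (s : Mˣ) {x y : M}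
    (h : x * y * s = s * y * x) : ↑s⁻¹ * x * y = y * x * ↑s⁻¹ := by
  have hs : SemiconjBy (↑s) (y * x) (x * y) := by
    simpa only [SemiconjBy, mul_assoc] using h.symm
  simpa only [SemiconjBy, mul_assoc] using hs.units_inv_symm_left

theorem reflection_equation_of_dressing {M : Type*} [Monoid M] {R R' R'' Rb T₁ T₂ B₁ B₂ : M}
    (S₁ S₂ : Mˣ)
    (hRTT : R * T₁ * T₂ = T₂ * T₁ * R)
    (hR'TS : R' * T₂ * S₁ = S₁ * T₂ * R')
    (hR''TS : R'' * T₁ * S₂ = S₂ * T₁ * R'')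
    (hRbSS : Rb * S₂ * S₁ = S₁ * S₂ * Rb)
    (hB : R * B₁ * R' * B₂ = B₂ * R'' * B₁ * Rb)
    (hB₁T₂ : Commute B₁ T₂) (hB₁S₂ : Commute B₁ ↑S₂⁻¹)
    (hB₂T₁ : Commute B₂ T₁) (hB₂S₁ : Commute B₂ ↑S₁⁻¹) :
    R * (T₁ * B₁ * ↑S₁⁻¹) * R' * (T₂ * B₂ * ↑S₂⁻¹) =
      T₂ * B₂ * ↑S₂⁻¹ * R'' * (T₁ * B₁ * ↑S₁⁻¹) * Rb := by
  have hS₁ := S₁.inv_mul_mul_eq_mul_mul_inv hR'TS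
  have hS₂ := S₂.inv_mul_mul_eq_mul_mul_inv hR''TS
  have hS₁S₂ := S₂.inv_mul_mul_eq_mul_mul_inv (S₁.inv_mul_mul_eq_mul_mul_inv hRbSS)
  calc R * (T₁ * B₁ * ↑S₁⁻¹) * R' * (T₂ * B₂ * ↑S₂⁻¹)
      = R * T₁ * B₁ * (↑S₁⁻¹ * R' * T₂) * B₂ * ↑S₂⁻¹ := by simp only [mul_assoc]
    _ = R * T₁ * (B₁ * T₂) * R' * (↑S₁⁻¹ * B₂) * ↑S₂⁻¹ := by rw [hS₁]; simp only [mul_assoc]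
    _ = R * T₁ * T₂ * (B₁ * R' * B₂) * ↑S₁⁻¹ * ↑S₂⁻¹ := by
      rw [hB₁T₂.eq, ← hB₂S₁.eq]; simp only [mul_assoc]
    _ = T₂ * T₁ * (R * B₁ * R' * B₂) * ↑S₁⁻¹ * ↑S₂⁻¹ := by rw [hRTT]; simp only [mul_assoc]
    _ = T₂ * (T₁ * B₂) * R'' * B₁ * (Rb * ↑S₁⁻¹ * ↑S₂⁻¹) := by rw [hB]; simp only [mul_assoc]
    _ = T₂ * B₂ * T₁ * R'' * (B₁ * ↑S₂⁻¹) * ↑S₁⁻¹ * Rb := by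
      rw [← hB₂T₁.eq, ← hS₁S₂]; simp only [mul_assoc]
    _ = T₂ * B₂ * (↑S₂⁻¹ * R'' * T₁) * B₁ * ↑S₁⁻¹ * Rb := by
      rw [hB₁S₂.eq, hS₂]; simp only [mul_assoc]
    _ = T₂ * B₂ * ↑S₂⁻¹ * R'' * (T₁ * B₁ * ↑S₁⁻¹) * Rb := by simp only [mul_assoc]

section Legs

variable {N : ℕ} {α : Type*}

theorem flipM_mul [NonUnitalNonAssocSemiring α] (M M' : TwoLeg N α) :
    flipM (M * M') = flipM M * flipM M' := by
  ext ⟨p₁, p₂⟩ ⟨q₁, q₂⟩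
  simp only [flipM, mul_apply, of_apply, Fintype.sum_prod_type]
  exact Finset.sum_comm

theorem flipM_leg1 [MulZeroOneClass α] (M : Matrix (Fin N) (Fin N) α) :
    flipM (leg1 M) = leg2 M := rfl

theorem flipM_leg2 [MulZeroOneClass α] (M : Matrix (Fin N) (Fin N) α) :
    flipM (leg2 M) = leg1 M := rfl

theorem leg1_one [MulZeroOneClass α] : leg1 (1 : Matrix (Fin N) (Fin N) α) = 1 := by
  ext ⟨p₁, p₂⟩ ⟨q₁, q₂⟩
  by_cases h₁ : p₁ = q₁ <;> by_cases h₂ : p₂ = q₂ <;> simp [leg1, one_apply, h₁, h₂]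

theorem leg1_mul [NonAssocSemiring α] (M M' : Matrix (Fin N) (Fin N) α) :
    leg1 (M * M') = leg1 M * leg1 M' := by
  ext ⟨p₁, p₂⟩ ⟨q₁, q₂⟩
  simp [leg1, mul_apply, Fintype.sum_prod_type, ite_mul, mul_ite]

theorem leg2_one [MulZeroOneClass α] : leg2 (1 : Matrix (Fin N) (Fin N) α) = 1 := by
  rw [← flipM_leg1, leg1_one]
  ext ⟨p₁, p₂⟩ ⟨q₁, q₂⟩
  simp [flipM, one_apply, and_comm]

theorem leg2_mul [NonAssocSemiring α] (M M' : Matrix (Fin N) (Fin N) α) :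
    leg2 (M * M') = leg2 M * leg2 M' := by
  rw [← flipM_leg1, leg1_mul, flipM_mul, flipM_leg1, flipM_leg1]

variable (N α) in
def leg1Hom [NonAssocSemiring α] : Matrix (Fin N) (Fin N) α →* TwoLeg N α where
  toFun := leg1
  map_one' := leg1_one
  map_mul' := leg1_mul

variable (N α) in
def leg2Hom [NonAssocSemiring α] : Matrix (Fin N) (Fin N) α →* TwoLeg N α where
  toFun := leg2
  map_one' := leg2_one
  map_mul' := leg2_mul

theorem commute_leg1_leg2 [NonAssocSemiring α] {M M' : Matrix (Fin N) (Fin N) α}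
    (h : ∀ i j k l, Commute (M i j) (M' k l)) : Commute (leg1 M) (leg2 M') := by
  ext ⟨p₁, p₂⟩ ⟨q₁, q₂⟩
  simpa [Commute, SemiconjBy, leg1, leg2, mul_apply, Fintype.sum_prod_type, ite_mul, mul_ite]
    using h p₁ q₁ p₂ q₂

theorem leg1_map {β : Type*} [MulZeroOneClass α] [MulZeroOneClass β] {f : α → β} (hf : f 0 = 0)
    (M : Matrix (Fin N) (Fin N) α) : (leg1 M).map f = leg1 (M.map f) := by
  ext p q
  simp [leg1, apply_ite f, hf]

theorem leg2_map {β : Type*} [MulZeroOneClass α] [MulZeroOneClass β] {f : α → β} (hf : f 0 = 0)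
    (M : Matrix (Fin N) (Fin N) α) : (leg2 M).map f = leg2 (M.map f) := by
  ext p q
  simp [leg2, apply_ite f, hf]

end Legs

section Scalars

variable {N : ℕ} {A : Type*} [Ring A] [Algebra ℂ A]

theorem commute_leg1_map_algebraMap (X : Matrix (Fin N) (Fin N) ℂ)
    (M : Matrix (Fin N) (Fin N) A) : Commute (leg1 (X.map (algebraMap ℂ A))) (leg2 M) :=
  commute_leg1_leg2 fun _ _ _ _ => Algebra.commute_algebraMap_left _ _

theorem commute_leg2_map_algebraMap (X : Matrix (Fin N) (Fin N) ℂ)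
    (M : Matrix (Fin N) (Fin N) A) : Commute (leg2 (X.map (algebraMap ℂ A))) (leg1 M) :=
  (commute_leg1_leg2 fun _ _ _ _ => Algebra.commute_algebraMap_right _ _).symm

theorem cmap_mul (M M' : TwoLeg N ℂ) : cmap A (M * M') = cmap A M * cmap A M' :=
  Matrix.map_mul

theorem cmap_leg1 (X : Matrix (Fin N) (Fin N) ℂ) :
    cmap A (leg1 X) = leg1 (X.map (algebraMap ℂ A)) :=
  leg1_map (map_zero _) X

theorem cmap_leg2 (X : Matrix (Fin N) (Fin N) ℂ) :
    cmap A (leg2 X) = leg2 (X.map (algebraMap ℂ A)) :=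
  leg2_map (map_zero _) X

theorem flipM_cmap (M : TwoLeg N ℂ) : flipM (cmap A M) = cmap A (flipM M) := rfl

end Scalars

theorem reflection_operator_reflection_equation_general {N : ℕ} {A : Type*} [Ring A]
    [Algebra ℂ A]
    (R : ℝ → ℝ → TwoLeg N ℂ)
    (T Tinv : ℝ → Matrix (Fin N) (Fin N) A)
    (B : ℝ → Matrix (Fin N) (Fin N) ℂ)
    (hT : ∀ k, T k * Tinv k = 1 ∧ Tinv k * T k = 1)
    (hRTT : ∀ k₁ k₂ : ℝ,
      cmap A (R k₁ k₂) * leg1 (T k₁) * leg2 (T k₂) =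
        leg2 (T k₂) * leg1 (T k₁) * cmap A (R k₁ k₂))
    (hrefl : ∀ k₁ k₂ : ℝ,
      R k₁ k₂ * leg1 (B k₁) * flipM (R k₂ (-k₁)) * leg2 (B k₂) =
        leg2 (B k₂) * R k₁ (-k₂) * leg1 (B k₁) * flipM (R (-k₂) (-k₁))) :
    ∀ k₁ k₂ : ℝ,
      cmap A (R k₁ k₂) * leg1 (bop T Tinv B k₁) * cmap A (flipM (R k₂ (-k₁))) *
          leg2 (bop T Tinv B k₂) =
        leg2 (bop T Tinv B k₂) * cmap A (R k₁ (-k₂)) * leg1 (bop T Tinv B k₁) *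
          cmap A (flipM (R (-k₂) (-k₁))) := by
  intro k₁ k₂
  let U : ℝ → (Matrix (Fin N) (Fin N) A)ˣ := fun k => ⟨T k, Tinv k, (hT k).1, (hT k).2⟩
  have hRTT₂₁ : ∀ k₁ k₂ : ℝ, cmap A (flipM (R k₁ k₂)) * leg2 (T k₁) * leg1 (T k₂) =
      leg1 (T k₂) * leg2 (T k₁) * cmap A (flipM (R k₁ k₂)) := fun k₁ k₂ => by
    simpa only [flipM_mul, flipM_leg1, flipM_leg2, flipM_cmap] using congrArg flipM (hRTT k₁ k₂)
  have hreflA := congrArg (cmap A) (hrefl k₁ k₂)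
  simp only [cmap_mul, cmap_leg1, cmap_leg2] at hreflA
  simp only [bop, leg1_mul, leg2_mul]
  exact reflection_equation_of_dressing (Units.map (leg1Hom N A) (U (-k₁)))
    (Units.map (leg2Hom N A) (U (-k₂))) (hRTT k₁ k₂) (hRTT₂₁ k₂ (-k₁)) (hRTT k₁ (-k₂))
    (hRTT₂₁ (-k₂) (-k₁)) hreflA (commute_leg1_map_algebraMap _ _)
    (commute_leg1_map_algebraMap _ _) (commute_leg2_map_algebraMap _ _)
    (commute_leg2_map_algebraMap _ _)

/-- if `T` satisfies the RTT relation, the scalar matrix `B`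
satisfies the reflection equation `R₁₂ B₁ R'₂₁ B₂ = B₂ R'₁₂ B₁ R̄₂₁`, and `R` is
unitary, then `b(k) = T(k) B(k) T(−k)⁻¹` satisfies the reflection equation
`R₁₂ b₁ R'₂₁ b₂ = b₂ R'₁₂ b₁ R̄₂₁`. -/
theorem reflection_operator_reflection_equation {N : ℕ} {A : Type*} [Ring A]
    [Algebra ℂ A]
    (R : ℝ → ℝ → TwoLeg N ℂ)
    (T Tinv : ℝ → Matrix (Fin N) (Fin N) A)
    (B : ℝ → Matrix (Fin N) (Fin N) ℂ)
    (hT : ∀ k, T k * Tinv k = 1 ∧ Tinv k * T k = 1)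
    (hunit : ∀ k₁ k₂ : ℝ, R k₁ k₂ * flipM (R k₂ k₁) = 1)
    (hRTT : ∀ k₁ k₂ : ℝ,
      cmap A (R k₁ k₂) * leg1 (T k₁) * leg2 (T k₂) =
        leg2 (T k₂) * leg1 (T k₁) * cmap A (R k₁ k₂))
    (hrefl : ∀ k₁ k₂ : ℝ,
      R k₁ k₂ * leg1 (B k₁) * flipM (R k₂ (-k₁)) * leg2 (B k₂) =
        leg2 (B k₂) * R k₁ (-k₂) * leg1 (B k₁) * flipM (R (-k₂) (-k₁))) :
    ∀ k₁ k₂ : ℝ,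
      cmap A (R k₁ k₂) * leg1 (bop T Tinv B k₁) * cmap A (flipM (R k₂ (-k₁))) *
          leg2 (bop T Tinv B k₂) =
        leg2 (bop T Tinv B k₂) * cmap A (R k₁ (-k₂)) * leg1 (bop T Tinv B k₁) *
          cmap A (flipM (R (-k₂) (-k₁))) :=
  reflection_operator_reflection_equation_general R T Tinv B hT hRTT hrefl
end

section
/- Suppose T satisfies the well-bred exchange relation T₁(k₁) a₂(k₂) = R₂₁(k₂,k₁) a₂(k₂) T₁(k₁) with the ZF generators a, and B(k) is a scalar matrix. Then b(k) := T(k) B(k) T(−k)⁻¹ satisfies a₁(k₁) b₂(k₂) = R₂₁(k₂,k₁) b₂(k₂) R₁₂(k₁,−k₂) a₁(k₁). -/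
/-!
Move `a₁(k₁)` through the three factors of `b₂(k₂) = T₂(k₂) B₂(k₂) T₂(−k₂)⁻¹` one at a time.
Inverting the exchange relation with the help of unitarity gives
`a₁(k₁) T₂(k₂) = R₂₁(k₂,k₁) T₂(k₂) a₁(k₁)`, the scalar matrix `B` commutes with `a`, and
conjugating the exchange relation at `−k₂` by `T(−k₂)⁻¹` gives
`a₁(k₁) T₂(−k₂)⁻¹ = T₂(−k₂)⁻¹ R₁₂(k₁,−k₂) a₁(k₁)`.
-/

open Matrix

section Exchange

variable {K A ι κ μ ν : Type*} [CommSemiring K] [Semiring A] [Algebra K A]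
  [Fintype ι] [Fintype κ]

/- With `x` in leg 1 and the matrices in leg 2, the relations below read `X₂ x₁ = S₁₂ x₁ X₂`,
`x₁ X₂ = L₂₁ X₂ x₁` and `x₁ Y₂ = Y₂ M₁₂ x₁`; `S.submatrix Prod.swap Prod.swap` is `S₂₁`. -/

theorem exchange_left_of_mul_flip_eq_one [DecidableEq ι] [DecidableEq κ]
    {x : ι → A} {X : Matrix κ μ A}
    {S : Matrix (ι × κ) (ι × κ) K} {L : Matrix (κ × ι) (κ × ι) K}
    (hLS : L * S.submatrix Prod.swap Prod.swap = 1)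
    (hS : ∀ p q i, X p q * x i = ∑ p', ∑ i', S (i, p) (i', p') • (x i' * X p' q))
    (i : ι) (p : κ) (q : μ) :
    x i * X p q = ∑ p₁, ∑ i₁, L (p, i) (p₁, i₁) • (X p₁ q * x i₁) := by
  have hS' : ∀ p₁ i₁, X p₁ q * x i₁ =
      ∑ j : κ × ι, S.submatrix Prod.swap Prod.swap (p₁, i₁) j • (x j.2 * X j.1 q) := by
    intro p₁ i₁
    rw [hS, Fintype.sum_prod_type]
    rfl
  symm
  calc ∑ p₁, ∑ i₁, L (p, i) (p₁, i₁) • (X p₁ q * x i₁)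
      = ∑ j : κ × ι, ∑ j' : κ × ι,
          (L (p, i) j * S.submatrix Prod.swap Prod.swap j j') • (x j'.2 * X j'.1 q) := by
        simp only [Fintype.sum_prod_type, hS', Finset.smul_sum, smul_smul]
    _ = ∑ j' : κ × ι, (L * S.submatrix Prod.swap Prod.swap) (p, i) j' • (x j'.2 * X j'.1 q) := by
        rw [Finset.sum_comm]
        simp only [Matrix.mul_apply, Finset.sum_smul]
    _ = x i * X p q := by
        simp [hLS, Matrix.one_apply]

theorem exchange_right_of_mul_eq_one [DecidableEq κ]
    {x : ι → A} {X Y : Matrix κ κ A} {S : Matrix (ι × κ) (ι × κ) K}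
    (hXY : X * Y = 1) (hYX : Y * X = 1)
    (hS : ∀ p q i, X p q * x i = ∑ p', ∑ i', S (i, p) (i', p') • (x i' * X p' q))
    (i : ι) (p q : κ) :
    x i * Y p q = ∑ q₁, ∑ i₂, S (i, q₁) (i₂, q) • (Y p q₁ * x i₂) := by
  set Z : Matrix κ κ A := Matrix.of fun p q => ∑ q₁, ∑ i₂, S (i, q₁) (i₂, q) • (Y p q₁ * x i₂)
  have hZX : Z * X = x i • 1 := by
    ext p t
    calc (Z * X) p t
        = ∑ q₁, Y p q₁ * ∑ q, ∑ i₂, S (i, q₁) (i₂, q) • (x i₂ * X q t) := by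
          simp only [Z, Matrix.mul_apply, Matrix.of_apply, Finset.sum_mul, Finset.mul_sum,
            smul_mul_assoc, mul_smul_comm, mul_assoc]
          exact Finset.sum_comm
      _ = (Y * X) p t * x i := by
          simp only [← hS, Matrix.mul_apply, Finset.sum_mul, mul_assoc]
      _ = (x i • 1 : Matrix κ κ A) p t := by
          rw [hYX]
          simp [Matrix.one_apply]
  have hZ : Z = x i • Y := by
    rw [← Matrix.mul_one Z, ← hXY, ← Matrix.mul_assoc, hZX, Matrix.smul_mul, Matrix.one_mul]
  exact (congrFun (congrFun hZ p) q).symm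

theorem exchange_left_mul_map [Fintype μ] {x : ι → A} {X : Matrix κ μ A}
    {L : Matrix (κ × ι) (κ × ι) K} (C : Matrix μ ν K)
    (hX : ∀ i p q, x i * X p q = ∑ p₁, ∑ i₁, L (p, i) (p₁, i₁) • (X p₁ q * x i₁))
    (i : ι) (p : κ) (q : ν) :
    x i * (X * C.map (algebraMap K A)) p q =
      ∑ p₁, ∑ i₁, L (p, i) (p₁, i₁) • ((X * C.map (algebraMap K A)) p₁ q * x i₁) := by
  have hcol : ∀ p, (X * C.map (algebraMap K A)) p q = ∑ r, C r q • X p r := by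
    intro p
    simp only [Matrix.mul_apply, Matrix.map_apply, Algebra.smul_def, Algebra.commutes]
  simp only [hcol, Finset.mul_sum, mul_smul_comm, hX, Finset.smul_sum, Finset.sum_mul,
    smul_mul_assoc]
  simp_rw [Finset.sum_comm (γ := μ), smul_comm (C _ q)]

theorem exchange_mul [Fintype μ] [Fintype ν] {x : ι → A} {X : Matrix κ μ A} {Y : Matrix μ ν A}
    {L : Matrix (κ × ι) (κ × ι) K} {M : Matrix (ι × ν) (ι × ν) K}
    (hX : ∀ i p q, x i * X p q = ∑ p₁, ∑ i₁, L (p, i) (p₁, i₁) • (X p₁ q * x i₁))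
    (hY : ∀ i p q, x i * Y p q = ∑ q₁, ∑ i₂, M (i, q₁) (i₂, q) • (Y p q₁ * x i₂))
    (i : ι) (p : κ) (q : ν) :
    x i * (X * Y) p q = ∑ i₁, ∑ p₁, ∑ q₁, ∑ i₂,
      (L (p, i) (p₁, i₁) * M (i₁, q₁) (i₂, q)) • ((X * Y) p₁ q₁ * x i₂) := by
  calc x i * (X * Y) p q
      = ∑ r, ∑ p₁, ∑ i₁, ∑ q₁, ∑ i₂,
          (L (p, i) (p₁, i₁) * M (i₁, q₁) (i₂, q)) • (X p₁ r * (Y r q₁ * x i₂)) := by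
        simp only [Matrix.mul_apply, Finset.mul_sum, ← mul_assoc, hX]
        simp only [Finset.sum_mul, smul_mul_assoc, mul_assoc, hY, Finset.mul_sum,
          mul_smul_comm, Finset.smul_sum, smul_smul]
    _ = _ := by
        simp only [Matrix.mul_apply, Finset.sum_mul, Finset.smul_sum, mul_assoc]
        simp_rw [Finset.sum_comm (γ := μ)]
        exact Finset.sum_comm

end Exchange

/-- if `T` satisfies the well-bred exchange relation
`T₁(k₁) a₂(k₂) = R₂₁(k₂,k₁) a₂(k₂) T₁(k₁)` (in components) and `B(k)` is a scalar
matrix, then `b(k) = T(k) B(k) T(−k)⁻¹` satisfies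
`a₁(k₁) b₂(k₂) = R₂₁(k₂,k₁) b₂(k₂) R₁₂(k₁,−k₂) a₁(k₁)` (in components). -/
theorem exchange_a_b {N : ℕ} {A : Type*} [Ring A] [Algebra ℂ A]
    (R : ℝ → ℝ → TwoLeg N ℂ)
    (a : Fin N → ℝ → A)
    (T Tinv : ℝ → Matrix (Fin N) (Fin N) A)
    (B : ℝ → Matrix (Fin N) (Fin N) ℂ)
    (hT : ∀ k, T k * Tinv k = 1 ∧ Tinv k * T k = 1)
    (hunit : ∀ k₁ k₂ : ℝ, R k₁ k₂ * flipM (R k₂ k₁) = 1)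
    (hTa : ∀ (k₁ k₂ : ℝ) (i j m : Fin N),
      T k₁ i j * a m k₂ =
        ∑ i' : Fin N, ∑ m' : Fin N,
          R k₂ k₁ (m, i) (m', i') • (a m' k₂ * T k₁ i' j)) :
    ∀ (k₁ k₂ : ℝ) (i m n : Fin N),
      a i k₁ * bop T Tinv B k₂ m n =
        ∑ i₁ : Fin N, ∑ m₁ : Fin N, ∑ m₂ : Fin N, ∑ i₂ : Fin N,
          (R k₂ k₁ (m, i) (m₁, i₁) * R k₁ (-k₂) (i₁, m₂) (i₂, n)) •
            (bop T Tinv B k₂ m₁ m₂ * a i₂ k₁) := by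
  intro k₁ k₂ i m n
  have hT_exchange := exchange_left_of_mul_flip_eq_one (x := fun j => a j k₁) (hunit k₂ k₁)
    (hTa k₂ k₁)
  have hTinv_exchange := exchange_right_of_mul_eq_one (x := fun j => a j k₁) (hT (-k₂)).1
    (hT (-k₂)).2 (hTa (-k₂) k₁)
  exact exchange_mul (exchange_left_mul_map (B k₂) hT_exchange) hTinv_exchange i m n
end

section
/- Under the same hypotheses, with T₁ a₂† = a₂† R₁₂ T₁, the operator b(k) = T(k) B(k) T(−k)⁻¹ satisfies b₁(k₁) a₂†(k₂) = a₂†(k₂) R₁₂(k₁,k₂) b₁(k₁) R₂₁(k₂,−k₁). -/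
open Matrix

/-!
In matrix form, with `T₁ = T ⊗ 1` and `a₂† = 1 ⊗ a†`, the hypothesis reads
`T₁ a₂† = a₂† R₁₂ T₁`. Conjugating it by `T₁⁻¹` and cancelling `R₁₂(−k₁,k₂)` against its
unitarity partner `R₂₁(k₂,−k₁)` gives `(T(−k₁)⁻¹)₁ a₂† = a₂† (T(−k₁)⁻¹)₁ R₂₁(k₂,−k₁)`, while the
c-number matrix `B₁` commutes with `a₂†`. Passing `a₂†` through the three factors of
`b₁ = T₁ B₁ (T(−k₁)⁻¹)₁` collects `R₁₂` on the left and `R₂₁` on the right.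
-/

theorem sum_pairs_comm {ι κ M : Type*} [Fintype ι] [Fintype κ] [AddCommMonoid M]
    (f : ι → ι → κ → κ → M) :
    ∑ a, ∑ b, ∑ c, ∑ d, f a b c d = ∑ c, ∑ d, ∑ a, ∑ b, f a b c d := by
  simpa only [Fintype.sum_prod_type] using
    Finset.sum_comm (s := Finset.univ) (t := Finset.univ)
      (f := fun (p : ι × ι) (q : κ × κ) => f p.1 p.2 q.1 q.2)

/- `legOne ι X` is `X ⊗ 1`, acting in the first leg of `n × ι`; `legTwo a` is `1 ⊗ a`, with the
row vector `a` in the second leg. With `ι = Unit` on the left of `legTwo a` and `ι = n` on its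
right, the componentwise exchange relations become identities of rectangular matrices over `A`. -/
def legOne {n α : Type*} (ι : Type*) [DecidableEq ι] [Zero α] (X : Matrix n n α) :
    Matrix (n × ι) (n × ι) α :=
  blockDiagonal fun _ => X

def legTwo {n α : Type*} [DecidableEq n] [Zero α] (a : n → α) : Matrix (n × Unit) (n × n) α :=
  of fun p q => if p.1 = q.1 then a q.2 else 0

section Semiring

variable {n A : Type*} [Fintype n] [DecidableEq n] [Semiring A]

omit [DecidableEq n] in
theorem legOne_mul (ι : Type*) [Fintype ι] [DecidableEq ι] (X Y : Matrix n n A) :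
    legOne ι (X * Y) = legOne ι X * legOne ι Y :=
  blockDiagonal_mul _ _

omit [Fintype n] in
theorem legOne_one (ι : Type*) [DecidableEq ι] : legOne ι (1 : Matrix n n A) = 1 :=
  blockDiagonal_one

theorem legOne_mul_legTwo_apply (X : Matrix n n A) (a : n → A) (i j m : n) (u : Unit) :
    (legOne Unit X * legTwo a) (i, u) (j, m) = X i j * a m := by
  simp [legOne, legTwo, mul_apply, Fintype.sum_prod_type, blockDiagonal_apply]

theorem legTwo_mul_legOne_apply (X : Matrix n n A) (a : n → A) (i j m : n) (u : Unit) :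
    (legTwo a * legOne n X) (i, u) (j, m) = a m * X i j := by
  simp [legOne, legTwo, mul_apply, Fintype.sum_prod_type, blockDiagonal_apply]

variable (a : n → A)

theorem legOne_mul_legTwo_mul {X Y : Matrix n n A} {L ρ : Matrix (n × n) (n × n) A}
    (hX : legOne Unit X * legTwo a = legTwo a * L * legOne n X)
    (hY : legOne Unit Y * legTwo a = legTwo a * legOne n Y * ρ) :
    legOne Unit (X * Y) * legTwo a = legTwo a * L * legOne n (X * Y) * ρ := by
  rw [legOne_mul, legOne_mul, Matrix.mul_assoc, hY]
  simp only [← Matrix.mul_assoc, hX]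

theorem legOne_mul_legTwo_mul_of_commute {X C : Matrix n n A} {L : Matrix (n × n) (n × n) A}
    (hX : legOne Unit X * legTwo a = legTwo a * L * legOne n X)
    (hC : ∀ i j m, Commute (C i j) (a m)) :
    legOne Unit (X * C) * legTwo a = legTwo a * L * legOne n (X * C) := by
  have hC' :
      legOne Unit C * legTwo a = legTwo a * legOne n C * (1 : Matrix (n × n) (n × n) A) := by
    rw [Matrix.mul_one]
    ext ⟨i, u⟩ ⟨j, m⟩
    rw [legOne_mul_legTwo_apply, legTwo_mul_legOne_apply, (hC i j m).eq]
  simpa only [Matrix.mul_one] using legOne_mul_legTwo_mul a hX hC'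

theorem legOne_mul_legTwo_of_inverse {T T' : Matrix n n A} {L ρ : Matrix (n × n) (n × n) A}
    (hTT' : T * T' = 1) (hT'T : T' * T = 1) (hLρ : L * ρ = 1)
    (hT : legOne Unit T * legTwo a = legTwo a * L * legOne n T) :
    legOne Unit T' * legTwo a = legTwo a * legOne n T' * ρ :=
  calc legOne Unit T' * legTwo a
      = legOne Unit T' * (legTwo a * L * legOne n (T * T') * ρ) := by
        rw [hTT', legOne_one, Matrix.mul_one, Matrix.mul_assoc _ L, hLρ, Matrix.mul_one]
    _ = legOne Unit T' * (legOne Unit T * legTwo a) * legOne n T' * ρ := by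
        rw [hT]; simp only [legOne_mul, Matrix.mul_assoc]
    _ = legTwo a * legOne n T' * ρ := by
        rw [← Matrix.mul_assoc, ← legOne_mul, hT'T, legOne_one, Matrix.one_mul]

end Semiring

section Algebra

variable {n K A : Type*} [Fintype n] [DecidableEq n] [CommSemiring K] [Semiring A] [Algebra K A]

theorem mul_algebraMap_mul (x y : A) (c : K) : x * algebraMap K A c * y = c • (x * y) := by
  rw [← Algebra.commutes, mul_assoc, Algebra.smul_def]

theorem legTwo_mul_map_mul_legOne_apply (a : n → A) (L : Matrix (n × n) (n × n) K)
    (X : Matrix n n A) (i j m : n) (u : Unit) :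
    (legTwo a * L.map (algebraMap K A) * legOne n X) (i, u) (j, m) =
      ∑ m' : n, ∑ i' : n, L (i, m') (i', m) • (a m' * X i' j) := by
  simp [legOne, legTwo, mul_apply, Fintype.sum_prod_type, blockDiagonal_apply, Finset.sum_mul,
    mul_algebraMap_mul]
  exact Finset.sum_comm

theorem legTwo_mul_map_mul_legOne_mul_map_apply (a : n → A) (L ρ : Matrix (n × n) (n × n) K)
    (X : Matrix n n A) (i j m : n) (u : Unit) :
    (legTwo a * L.map (algebraMap K A) * legOne n X * ρ.map (algebraMap K A)) (i, u) (j, m) =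
      ∑ m₁ : n, ∑ i₁ : n, ∑ i₂ : n, ∑ m₂ : n,
        (L (i, m₁) (i₁, m₂) * ρ (i₂, m₂) (j, m)) • (a m₁ * X i₁ i₂) := by
  rw [mul_apply]
  simp only [Fintype.sum_prod_type, legTwo_mul_map_mul_legOne_apply, map_apply,
    ← Algebra.commutes, ← Algebra.smul_def, Finset.smul_sum, smul_smul, mul_comm (ρ _ _)]
  exact sum_pairs_comm _

end Algebra

/-- if `T` satisfies `T₁(k₁) a₂†(k₂) = a₂†(k₂) R₁₂(k₁,k₂) T₁(k₁)`
(in components) and `R` is unitary, then `b(k) = T(k) B(k) T(−k)⁻¹` satisfies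
`b₁(k₁) a₂†(k₂) = a₂†(k₂) R₁₂(k₁,k₂) b₁(k₁) R₂₁(k₂,−k₁)` (in components). -/
theorem exchange_b_adag {N : ℕ} {A : Type*} [Ring A] [Algebra ℂ A]
    (R : ℝ → ℝ → TwoLeg N ℂ)
    (adag : Fin N → ℝ → A)
    (T Tinv : ℝ → Matrix (Fin N) (Fin N) A)
    (B : ℝ → Matrix (Fin N) (Fin N) ℂ)
    (hT : ∀ k, T k * Tinv k = 1 ∧ Tinv k * T k = 1)
    (hunit : ∀ k₁ k₂ : ℝ, R k₁ k₂ * flipM (R k₂ k₁) = 1)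
    (hTadag : ∀ (k₁ k₂ : ℝ) (i j m : Fin N),
      T k₁ i j * adag m k₂ =
        ∑ m' : Fin N, ∑ i' : Fin N,
          R k₁ k₂ (i, m') (i', m) • (adag m' k₂ * T k₁ i' j)) :
    ∀ (k₁ k₂ : ℝ) (i j m : Fin N),
      bop T Tinv B k₁ i j * adag m k₂ =
        ∑ m₁ : Fin N, ∑ i₁ : Fin N, ∑ i₂ : Fin N, ∑ m₂ : Fin N,
          (R k₁ k₂ (i, m₁) (i₁, m₂) * R k₂ (-k₁) (m₂, i₂) (m, j)) •
            (adag m₁ k₂ * bop T Tinv B k₁ i₁ i₂) := by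
  intro k₁ k₂ i j m
  set a : Fin N → A := fun m => adag m k₂
  have hTa : ∀ k, legOne Unit (T k) * legTwo a =
      legTwo a * (R k k₂).map (algebraMap ℂ A) * legOne (Fin N) (T k) := by
    intro k
    ext ⟨i, u⟩ ⟨j, m⟩
    rw [legOne_mul_legTwo_apply, legTwo_mul_map_mul_legOne_apply]
    exact hTadag k k₂ i j m
  have hTBa := legOne_mul_legTwo_mul_of_commute a (hTa k₁)
    (C := (B k₁).map (algebraMap ℂ A)) fun _ _ _ => Algebra.commute_algebraMap_left _ _
  have hTinva := legOne_mul_legTwo_of_inverse a (hT (-k₁)).1 (hT (-k₁)).2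
    (ρ := (flipM (R k₂ (-k₁))).map (algebraMap ℂ A))
    (by rw [← Matrix.map_mul, hunit, Matrix.map_one _ (map_zero _) (map_one _)]) (hTa (-k₁))
  have hba := congr_fun₂ (legOne_mul_legTwo_mul a hTBa hTinva) (i, ()) (j, m)
  rwa [legOne_mul_legTwo_apply, legTwo_mul_map_mul_legOne_mul_map_apply] at hba
end

section
/- Suppose the elements a, a†, b satisfy the exchange relations of Theorem 1: a₁ a₂† = a₂† R₁₂ a₁ + δ₁₂ (treated formally), a₁ b₂ = R₂₁ b₂ R'₁₂ a₁, b₁ a₂† = a₂† R₁₂ b₁ R'₂₁, the reflection equation, and unitarity of R. Then ã(k) := ½(a(k) + b(k)a(−k)) and ã†(k) := ½(a†(k) + a†(−k)b(−k)) satisfy ã₁ ã₂† = ã₂† R₁₂ ã₁ + ½ δ₁₂ δ + ½ b₁₂, where δ₁₂ = δ(k₁−k₂)∑ᵢ eᵢ⊗eᵢ†, δ'₁₂ = δ(k₁+k₂)∑ᵢ eᵢ⊗eᵢ†, and b₁₂ = δ(k₁+k₂)∑ᵢⱼ bᵢⱼ(k₁) eᵢ⊗eⱼ†. -/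
open Matrix

/-- The matrix of reflection generators `b(k) = (bᵢⱼ(k))`. -/
def bmat {N : ℕ} {A : Type*} (b : Fin N → Fin N → ℝ → A) (k : ℝ) :
    Matrix (Fin N) (Fin N) A :=
  Matrix.of fun i j => b i j k

/-- The boundary annihilation generators `ã(k) = ½(a(k) + b(k) a(−k))`. -/
noncomputable def tilA {N : ℕ} {A : Type*} [Ring A] [Algebra ℂ A]
    (a : Fin N → ℝ → A) (b : Fin N → Fin N → ℝ → A) (i : Fin N) (k : ℝ) : A :=
  ((2 : ℂ)⁻¹) • (a i k + ∑ j : Fin N, b i j k * a j (-k))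

/-- The boundary creation generators `ã†(k) = ½(a†(k) + a†(−k) b(−k))`. -/
noncomputable def tilAdag {N : ℕ} {A : Type*} [Ring A] [Algebra ℂ A]
    (adag : Fin N → ℝ → A) (b : Fin N → Fin N → ℝ → A) (i : Fin N) (k : ℝ) : A :=
  ((2 : ℂ)⁻¹) • (adag i k + ∑ j : Fin N, adag j (-k) * b j i (-k))

/-!
Expand `ã₁ ã₂†` into the four products `a a†`, `a (a† b)`, `(b a) a†` and `(b a)(a† b)` and bring
each to the normal order `ã₂† · ã₁`. The exchange `a₁ a₂† = a₂† R₁₂ a₁ + δ₁₂` is the starting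
point of every term; moving the dressing `b` through `a` or `a†` produces a factor `R₂₁` that
unitarity cancels against the `R₁₂` of that exchange, leaving `R₁₂(k₁, k₂)` in all four cases.
For `(b a)(a† b)` the reflection equation shows that `b(k₁)` passes through `a†(-k₂) b(-k₂)`
exactly as through `a†(k₂)`. The delta terms are `δ₁₂` from `a a†`, `δ(k₁ + k₂) b(k₁)` from each
mixed product and `δ(k₁ - k₂) b(k₁) b(-k₁) = δ₁₂` from the last one, so the factor `¼` leaves
`½ δ₁₂ + ½ b₁₂`.
-/

open Finset

section Unitarity

variable {N : ℕ}

theorem mul_flipM_apply_eq_ite {M U : TwoLeg N ℂ} (h : M * flipM U = 1) (p : Fin N × Fin N)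
    (x y : Fin N) : ∑ q, M p q * U (q.2, q.1) (y, x) = if p = (x, y) then 1 else 0 := by
  simpa [mul_apply, flipM, one_apply] using congrFun₂ h p (x, y)

theorem sum_smul_of_mul_flipM_eq_one_row {E : Type*} [AddCommMonoid E] [Module ℂ E]
    {M U : TwoLeg N ℂ} (h : M * flipM U = 1) (p : Fin N × Fin N) (G : Fin N → Fin N → E) :
    ∑ v, ∑ u, ∑ x, ∑ y, (M p (u, v) * U (v, u) (y, x)) • G x y = G p.1 p.2 := by
  rw [sum_comm, ← Fintype.sum_prod_type', sum_comm]
  refine (sum_congr rfl fun x _ => sum_comm).trans ?_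
  simp [← sum_smul, mul_flipM_apply_eq_ite h, ite_smul, Prod.ext_iff, ite_and]

theorem sum_smul_of_mul_flipM_eq_one_col {E : Type*} [AddCommMonoid E] [Module ℂ E]
    {M U : TwoLeg N ℂ} (h : M * flipM U = 1) (x y : Fin N) (G : Fin N → Fin N → E) :
    ∑ v, ∑ u, ∑ b, ∑ a, (U (v, u) (y, x) * M (a, b) (u, v)) • G a b = G x y := by
  simp only [mul_comm (U _ _)]
  rw [sum_comm, ← Fintype.sum_prod_type', sum_comm]
  refine (sum_congr rfl fun x _ => sum_comm).trans ?_
  simp [← sum_smul, mul_flipM_apply_eq_ite h, ite_smul, Prod.ext_iff, ite_and]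

end Unitarity

section Entries

variable {N : ℕ}

theorem ite_one_zero_apply {n α : Type*} [DecidableEq n] [Zero α] [One α] (P : Prop)
    [Decidable P] (i j : n) :
    (if P then (1 : Matrix n n α) else 0) i j = if P ∧ i = j then 1 else 0 := by
  by_cases h : P <;> simp [h, one_apply]

theorem mul_leg2_apply {α : Type*} [Semiring α] (O : TwoLeg N α) (w : Matrix (Fin N) (Fin N) α)
    (p : Fin N × Fin N) (j m : Fin N) : (O * leg2 w) p (j, m) = ∑ n, O p (j, n) * w n m := by
  simp [mul_apply, leg2, Fintype.sum_prod_type]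

theorem leg2_mul_apply {α : Type*} [Semiring α] (O : TwoLeg N α) (w : Matrix (Fin N) (Fin N) α)
    (i m₁ : Fin N) (q : Fin N × Fin N) : (leg2 w * O) (i, m₁) q = ∑ n, w m₁ n * O (i, n) q := by
  simp [mul_apply, leg2, Fintype.sum_prod_type]

theorem cmap_mul_leg1_mul_cmap_flipM_apply {A : Type*} [Ring A] [Algebra ℂ A]
    (U V : TwoLeg N ℂ) (z : Matrix (Fin N) (Fin N) A) (i m₁ j m : Fin N) :
    (cmap A U * leg1 z * cmap A (flipM V)) (i, m₁) (j, m) =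
      ∑ i₁, ∑ i₂, ∑ m₂, (U (i, m₁) (i₁, m₂) * V (m₂, i₂) (m, j)) • z i₁ i₂ := by
  simp only [mul_apply, cmap, leg1, flipM, map_apply, of_apply, Fintype.sum_prod_type, mul_ite,
    mul_zero, sum_ite_eq', mem_univ, if_true, Algebra.algebraMap_eq_smul_one, mul_smul_comm,
    smul_mul_assoc, mul_one, one_mul, smul_sum, smul_smul, mul_comm (V _ _)]
  exact sum_comm_cycle

end Entries

section ExchangeRelations

variable {N : ℕ} {A : Type*} [Ring A] [Algebra ℂ A]

/-- `x₁ y₂ = y₂ M₁₂ x₁ + c₁₂`. -/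
def ExchangeRel (M : TwoLeg N ℂ) (x y : Fin N → A) (c : Matrix (Fin N) (Fin N) A) : Prop :=
  ∀ i j, x i * y j = (∑ i', ∑ j', M (i, j') (i', j) • (y j' * x i')) + c i j

/-- `x₁ z₂ = U₂₁ z₂ V₁₂ x₁`. -/
def AnnihReflRel (U V : TwoLeg N ℂ) (x : Fin N → A) (z : Matrix (Fin N) (Fin N) A) : Prop :=
  ∀ i m n, x i * z m n = ∑ i₁, ∑ m₁, ∑ m₂, ∑ i₂,
    (U (m, i) (m₁, i₁) * V (i₁, m₂) (i₂, n)) • (z m₁ m₂ * x i₂)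

/-- `z₁ y₂ = y₂ U₁₂ z₁ V₂₁`. -/
def ReflCreatRel (U V : TwoLeg N ℂ) (z : Matrix (Fin N) (Fin N) A) (y : Fin N → A) : Prop :=
  ∀ i j m, z i j * y m = ∑ m₁, ∑ i₁, ∑ i₂, ∑ m₂,
    (U (i, m₁) (i₁, m₂) * V (m₂, i₂) (m, j)) • (y m₁ * z i₁ i₂)

theorem ExchangeRel.add_left {M : TwoLeg N ℂ} {x x' y : Fin N → A}
    {c c' : Matrix (Fin N) (Fin N) A} (h : ExchangeRel M x y c) (h' : ExchangeRel M x' y c') :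
    ExchangeRel M (x + x') y (c + c') := by
  intro i j
  simp only [Pi.add_apply, add_mul, mul_add, smul_add, sum_add_distrib, h i j, h' i j,
    Matrix.add_apply]
  abel

theorem ExchangeRel.add_right {M : TwoLeg N ℂ} {x y y' : Fin N → A}
    {c c' : Matrix (Fin N) (Fin N) A} (h : ExchangeRel M x y c) (h' : ExchangeRel M x y' c') :
    ExchangeRel M x (y + y') (c + c') := by
  intro i j
  simp only [Pi.add_apply, add_mul, mul_add, smul_add, sum_add_distrib, h i j, h' i j,
    Matrix.add_apply]
  abel

theorem ExchangeRel.smul_left {M : TwoLeg N ℂ} {x y : Fin N → A}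
    {c : Matrix (Fin N) (Fin N) A} (h : ExchangeRel M x y c) (r : ℂ) :
    ExchangeRel M (r • x) y (r • c) := by
  intro i j
  simp only [Pi.smul_apply, smul_mul_assoc, mul_smul_comm, h i j, smul_add, smul_sum,
    smul_comm r, Matrix.smul_apply]

theorem ExchangeRel.smul_right {M : TwoLeg N ℂ} {x y : Fin N → A}
    {c : Matrix (Fin N) (Fin N) A} (h : ExchangeRel M x y c) (r : ℂ) :
    ExchangeRel M x (r • y) (r • c) := by
  intro i j
  simp only [Pi.smul_apply, smul_mul_assoc, mul_smul_comm, h i j, smul_add, smul_sum,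
    smul_comm r, Matrix.smul_apply]

theorem ExchangeRel.average {M : TwoLeg N ℂ} {x x' y y' : Fin N → A}
    {δ β : Matrix (Fin N) (Fin N) A} (h₁₁ : ExchangeRel M x y δ) (h₁₂ : ExchangeRel M x y' β)
    (h₂₁ : ExchangeRel M x' y β) (h₂₂ : ExchangeRel M x' y' δ) :
    ExchangeRel M ((2 : ℂ)⁻¹ • (x + x')) ((2 : ℂ)⁻¹ • (y + y'))
      ((2 : ℂ)⁻¹ • δ + (2 : ℂ)⁻¹ • β) := by
  have h := (((h₁₁.add_right h₁₂).add_left (h₂₁.add_right h₂₂)).smul_left (2 : ℂ)⁻¹).smul_right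
    (2 : ℂ)⁻¹
  rwa [show (2 : ℂ)⁻¹ • (2 : ℂ)⁻¹ • (δ + β + (β + δ)) = (2 : ℂ)⁻¹ • δ + (2 : ℂ)⁻¹ • β by
    module] at h

theorem ExchangeRel.vecMul_right {M U V : TwoLeg N ℂ} {x y : Fin N → A}
    {c z : Matrix (Fin N) (Fin N) A} (hxy : ExchangeRel M x y c) (hxz : AnnihReflRel U V x z)
    (hMU : M * flipM U = 1) : ExchangeRel V x (y ᵥ* z) (c * z) := by
  intro i j
  set G : Fin N → Fin N → A := fun i₁ m₁ => ∑ m₂, ∑ i₂, V (i₁, m₂) (i₂, j) • (z m₁ m₂ * x i₂)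
  have hxz' (i' n : Fin N) : x i' * z n j = ∑ i₁, ∑ m₁, U (n, i') (m₁, i₁) • G i₁ m₁ := by
    simp only [hxz i' n j, G, smul_sum, mul_smul]
  calc x i * (y ᵥ* z) j
      = ∑ n, ∑ i', ∑ n', M (i, n') (i', n) • (y n' * (x i' * z n j)) + (c * z) i j := by
        simp only [vecMul, dotProduct, mul_sum, ← mul_assoc, hxy i, add_mul, sum_add_distrib,
          sum_mul, smul_mul_assoc, mul_apply]
    _ = ∑ n', y n' * ∑ n, ∑ i', M (i, n') (i', n) • (x i' * z n j) + (c * z) i j := by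
        rw [sum_comm_cycle]
        simp only [mul_sum, mul_smul_comm]
    _ = ∑ n', y n' * G i n' + (c * z) i j := by
        simp only [hxz', smul_sum, smul_smul, sum_smul_of_mul_flipM_eq_one_row hMU (i, _)]
    _ = ∑ i', ∑ j', V (i, j') (i', j) • ((y ᵥ* z) j' * x i') + (c * z) i j := by
        simp only [G, vecMul, dotProduct, mul_sum, sum_mul, smul_sum, mul_smul_comm, mul_assoc]
        rw [sum_comm_cycle]
        exact congrArg (· + _) (sum_congr rfl fun _ _ => sum_comm)

theorem ExchangeRel.mulVec_left {M U V : TwoLeg N ℂ} {x y : Fin N → A}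
    {c z : Matrix (Fin N) (Fin N) A} (hxy : ExchangeRel M x y c) (hzy : ReflCreatRel U V z y)
    (hVM : V * flipM M = 1) : ExchangeRel U (z *ᵥ x) y (z * c) := by
  intro i j
  set G : Fin N → Fin N → Fin N → A := fun p' m₂ i₂ =>
    ∑ m₁, ∑ i₁, U (i, m₁) (i₁, m₂) • (y m₁ * z i₁ i₂ * x p')
  have hzy' (p j' p' : Fin N) : z i p * y j' * x p' =
      ∑ i₂, ∑ m₂, V (m₂, i₂) (j', p) • G p' m₂ i₂ := by
    simp only [hzy i p j', G, sum_mul, smul_mul_assoc, smul_sum, smul_smul]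
    conv_lhs => rw [← Fintype.sum_prod_type', sum_comm]
    refine sum_congr rfl fun i₂ _ => ?_
    rw [sum_comm]
    simp only [Fintype.sum_prod_type, mul_comm]
  calc (z *ᵥ x) i * y j
      = ∑ p, ∑ p', ∑ j', M (p, j') (p', j) • (z i p * y j' * x p') + (z * c) i j := by
        simp only [mulVec, dotProduct, sum_mul, mul_assoc, hxy _ j, mul_add, sum_add_distrib,
          mul_sum, mul_smul_comm, mul_apply]
    _ = ∑ p', G p' j p' + (z * c) i j := by
        rw [sum_comm]
        simp only [hzy', smul_sum, smul_smul, sum_smul_of_mul_flipM_eq_one_col hVM]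
    _ = ∑ i', ∑ j', U (i, j') (i', j) • (y j' * (z *ᵥ x) i') + (z * c) i j := by
        simp only [G, mulVec, dotProduct, mul_sum, smul_sum, mul_assoc]
        rw [sum_comm_cycle]
        exact congrArg (· + _) (sum_congr rfl fun _ _ => sum_comm)

theorem reflCreatRel_iff {U V : TwoLeg N ℂ} {z : Matrix (Fin N) (Fin N) A} {y : Fin N → A} :
    ReflCreatRel U V z y ↔
      ∀ i j m, z i j * y m = ∑ m₁, y m₁ * (cmap A U * leg1 z * cmap A (flipM V)) (i, m₁) (j, m) := by
  simp only [ReflCreatRel, cmap_mul_leg1_mul_cmap_flipM_apply, mul_sum, mul_smul_comm]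

theorem ReflCreatRel.vecMul_right {U V U' V' : TwoLeg N ℂ} {y : Fin N → A}
    {z w : Matrix (Fin N) (Fin N) A} (hzy : ReflCreatRel U V z y)
    (hrefl : cmap A U * leg1 z * cmap A (flipM V) * leg2 w =
      leg2 w * cmap A U' * leg1 z * cmap A (flipM V')) :
    ReflCreatRel U' V' z (y ᵥ* w) := by
  rw [reflCreatRel_iff] at hzy ⊢
  intro i j m
  set O := cmap A U * leg1 z * cmap A (flipM V)
  set O' := cmap A U' * leg1 z * cmap A (flipM V')
  calc z i j * (y ᵥ* w) m
      = ∑ m₁, y m₁ * (O * leg2 w) (i, m₁) (j, m) := by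
        simp only [vecMul, dotProduct, mul_sum, ← mul_assoc, hzy, sum_mul, mul_leg2_apply]
        exact sum_comm
    _ = ∑ m₁, y m₁ * (leg2 w * O') (i, m₁) (j, m) := by
        rw [hrefl]
        simp only [O', Matrix.mul_assoc]
    _ = ∑ n, (y ᵥ* w) n * O' (i, n) (j, m) := by
        simp only [leg2_mul_apply, vecMul, dotProduct, mul_sum, sum_mul, mul_assoc]
        exact sum_comm

end ExchangeRelations

theorem tilde_a_tilde_adag_exchange_general {N : ℕ} {A : Type*} [Ring A] [Algebra ℂ A]
    (R : ℝ → ℝ → TwoLeg N ℂ)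
    (a adag : Fin N → ℝ → A) (b : Fin N → Fin N → ℝ → A)
    (hunit : ∀ k₁ k₂ : ℝ, R k₁ k₂ * flipM (R k₂ k₁) = 1)
    (haad : ∀ (k₁ k₂ : ℝ) (i j : Fin N),
      a i k₁ * adag j k₂ =
        (∑ i' : Fin N, ∑ j' : Fin N,
          R k₁ k₂ (i, j') (i', j) • (adag j' k₂ * a i' k₁)) +
        (if k₁ = k₂ ∧ i = j then (1 : A) else 0))
    (hab : ∀ (k₁ k₂ : ℝ) (i m n : Fin N),
      a i k₁ * b m n k₂ =
        ∑ i₁ : Fin N, ∑ m₁ : Fin N, ∑ m₂ : Fin N, ∑ i₂ : Fin N,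
          (R k₂ k₁ (m, i) (m₁, i₁) * R k₁ (-k₂) (i₁, m₂) (i₂, n)) •
            (b m₁ m₂ k₂ * a i₂ k₁))
    (hbad : ∀ (k₁ k₂ : ℝ) (i j m : Fin N),
      b i j k₁ * adag m k₂ =
        ∑ m₁ : Fin N, ∑ i₁ : Fin N, ∑ i₂ : Fin N, ∑ m₂ : Fin N,
          (R k₁ k₂ (i, m₁) (i₁, m₂) * R k₂ (-k₁) (m₂, i₂) (m, j)) •
            (adag m₁ k₂ * b i₁ i₂ k₁))
    (hrefl : ∀ k₁ k₂ : ℝ,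
      cmap A (R k₁ k₂) * leg1 (bmat b k₁) * cmap A (flipM (R k₂ (-k₁))) *
          leg2 (bmat b k₂) =
        leg2 (bmat b k₂) * cmap A (R k₁ (-k₂)) * leg1 (bmat b k₁) *
          cmap A (flipM (R (-k₂) (-k₁))))
    (hbb : ∀ k : ℝ, bmat b k * bmat b (-k) = 1) :
    ∀ (k₁ k₂ : ℝ) (i j : Fin N),
      tilA a b i k₁ * tilAdag adag b j k₂ =
        (∑ i' : Fin N, ∑ j' : Fin N,
          R k₁ k₂ (i, j') (i', j) • (tilAdag adag b j' k₂ * tilA a b i' k₁)) +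
        ((2 : ℂ)⁻¹) • (if k₁ = k₂ ∧ i = j then (1 : A) else 0) +
        ((2 : ℂ)⁻¹) • (if k₁ = -k₂ then b i j k₁ else 0) := by
  intro k₁ k₂ i j
  have hex (k₁ k₂ : ℝ) : ExchangeRel (R k₁ k₂) (a · k₁) (adag · k₂) (if k₁ = k₂ then 1 else 0) :=
    fun i j => by rw [haad, ite_one_zero_apply]
  have hannih (k₁ k₂ : ℝ) : AnnihReflRel (R (-k₂) k₁) (R k₁ k₂) (a · k₁) (bmat b (-k₂)) :=
    fun i m n => by simpa only [neg_neg, bmat, of_apply] using hab k₁ (-k₂) i m n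
  have hcreat (k₁ k₂ : ℝ) : ReflCreatRel (R k₁ k₂) (R k₂ (-k₁)) (bmat b k₁) (adag · k₂) :=
    hbad k₁ k₂
  have hcreat' : ReflCreatRel (R k₁ k₂) (R k₂ (-k₁)) (bmat b k₁)
      ((adag · (-k₂)) ᵥ* bmat b (-k₂)) :=
    (hcreat k₁ (-k₂)).vecMul_right (by simpa only [neg_neg] using hrefl k₁ (-k₂))
  have h₁₂ : ExchangeRel (R k₁ k₂) (a · k₁) ((adag · (-k₂)) ᵥ* bmat b (-k₂))
      (if k₁ = -k₂ then bmat b k₁ else 0) := by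
    convert (hex k₁ (-k₂)).vecMul_right (hannih k₁ k₂) (hunit k₁ (-k₂)) using 1
    by_cases h : k₁ = -k₂ <;> simp [h]
  have h₂₁ : ExchangeRel (R k₁ k₂) (bmat b k₁ *ᵥ (a · (-k₁))) (adag · k₂)
      (if k₁ = -k₂ then bmat b k₁ else 0) := by
    convert (hex (-k₁) k₂).mulVec_left (hcreat k₁ k₂) (hunit k₂ (-k₁)) using 1
    by_cases h : k₁ = -k₂ <;> simp [h, neg_eq_iff_eq_neg]
  have h₂₂ : ExchangeRel (R k₁ k₂) (bmat b k₁ *ᵥ (a · (-k₁))) ((adag · (-k₂)) ᵥ* bmat b (-k₂))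
      (if k₁ = k₂ then 1 else 0) := by
    convert ((hex (-k₁) (-k₂)).vecMul_right (hannih (-k₁) k₂)
      (hunit (-k₁) (-k₂))).mulVec_left hcreat' (hunit k₂ (-k₁)) using 1
    by_cases h : k₁ = k₂ <;> simp [h, hbb]
  have key : ExchangeRel (R k₁ k₂) (tilA a b · k₁) (tilAdag adag b · k₂) _ :=
    (hex k₁ k₂).average h₁₂ h₂₁ h₂₂
  rw [key i j, add_assoc]
  congr 1
  simp only [Matrix.add_apply, Matrix.smul_apply, ite_one_zero_apply]
  congr 2
  split_ifs <;> rfl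

/-- given the ZF/boundary exchange relations (with Kronecker-delta
discretization of `δ(k₁∓k₂)`), the boundary generators satisfy
`ã₁ ã₂† = ã₂† R₁₂ ã₁ + ½ δ₁₂ + ½ b₁₂`. -/
theorem tilde_a_tilde_adag_exchange {N : ℕ} {A : Type*} [Ring A] [Algebra ℂ A]
    (R : ℝ → ℝ → TwoLeg N ℂ)
    (a adag : Fin N → ℝ → A) (b : Fin N → Fin N → ℝ → A)
    (hunit : ∀ k₁ k₂ : ℝ, R k₁ k₂ * flipM (R k₂ k₁) = 1)
    (haa : ∀ (k₁ k₂ : ℝ) (i j : Fin N),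
      a i k₁ * a j k₂ =
        ∑ i' : Fin N, ∑ j' : Fin N,
          R k₂ k₁ (j, i) (j', i') • (a j' k₂ * a i' k₁))
    (hadad : ∀ (k₁ k₂ : ℝ) (i j : Fin N),
      adag i k₁ * adag j k₂ =
        ∑ i' : Fin N, ∑ j' : Fin N,
          R k₂ k₁ (j', i') (j, i) • (adag j' k₂ * adag i' k₁))
    (haad : ∀ (k₁ k₂ : ℝ) (i j : Fin N),
      a i k₁ * adag j k₂ =
        (∑ i' : Fin N, ∑ j' : Fin N,
          R k₁ k₂ (i, j') (i', j) • (adag j' k₂ * a i' k₁)) +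
        (if k₁ = k₂ ∧ i = j then (1 : A) else 0))
    (hab : ∀ (k₁ k₂ : ℝ) (i m n : Fin N),
      a i k₁ * b m n k₂ =
        ∑ i₁ : Fin N, ∑ m₁ : Fin N, ∑ m₂ : Fin N, ∑ i₂ : Fin N,
          (R k₂ k₁ (m, i) (m₁, i₁) * R k₁ (-k₂) (i₁, m₂) (i₂, n)) •
            (b m₁ m₂ k₂ * a i₂ k₁))
    (hbad : ∀ (k₁ k₂ : ℝ) (i j m : Fin N),
      b i j k₁ * adag m k₂ =
        ∑ m₁ : Fin N, ∑ i₁ : Fin N, ∑ i₂ : Fin N, ∑ m₂ : Fin N,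
          (R k₁ k₂ (i, m₁) (i₁, m₂) * R k₂ (-k₁) (m₂, i₂) (m, j)) •
            (adag m₁ k₂ * b i₁ i₂ k₁))
    (hrefl : ∀ k₁ k₂ : ℝ,
      cmap A (R k₁ k₂) * leg1 (bmat b k₁) * cmap A (flipM (R k₂ (-k₁))) *
          leg2 (bmat b k₂) =
        leg2 (bmat b k₂) * cmap A (R k₁ (-k₂)) * leg1 (bmat b k₁) *
          cmap A (flipM (R (-k₂) (-k₁))))
    (hbb : ∀ k : ℝ, bmat b k * bmat b (-k) = 1) :
    ∀ (k₁ k₂ : ℝ) (i j : Fin N),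
      tilA a b i k₁ * tilAdag adag b j k₂ =
        (∑ i' : Fin N, ∑ j' : Fin N,
          R k₁ k₂ (i, j') (i', j) • (tilAdag adag b j' k₂ * tilA a b i' k₁)) +
        ((2 : ℂ)⁻¹) • (if k₁ = k₂ ∧ i = j then (1 : A) else 0) +
        ((2 : ℂ)⁻¹) • (if k₁ = -k₂ then b i j k₁ else 0) :=
  tilde_a_tilde_adag_exchange_general R a adag b hunit haad hab hbad hrefl hbb
end

section
/- In the boundary algebra B_R^B (where ρ = id, i.e., ã†(−k) b(−k) = ã†(k) and b(k) ã(−k) = ã(k)), the odd Hamiltonians vanish: H^(2n+1) := ∫ dk k^(2n+1) ã†(k)·ã(k) = 0 for all n ≥ 0. (Discretized version: for a sign-symmetric finite set K ⊂ ℝ of spectral parameters, ∑_{k∈K} k^(2n+1) ã†(k)·ã(k) = 0.) -/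
/-!
The reflection relations say that `ã†(k)` and `ã(k)` are obtained from `ã†(−k)` and `ã(−k)` by
the mutually inverse matrices `b(−k)` and `b(k)`, acting on opposite sides. These cancel in the
contraction `ã†(k)·ã(k)`, which is therefore even in `k`; multiplied by the odd weight `k^(2n+1)`
it sums to zero over a sign-symmetric set.
-/

open Matrix

/-- The discretized Hamiltonian `H^(m) = ∑_{k∈K} k^m ã†(k)·ã(k)`. -/
noncomputable def Ham {N : ℕ} {A : Type*} [Ring A] [Algebra ℂ A]
    (K : Finset ℝ) (m : ℕ) (ta tadag : Fin N → ℝ → A) : A :=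
  ∑ k ∈ K, ((k : ℂ) ^ m) • ∑ i : Fin N, tadag i k * ta i k

theorem Matrix.vecMul_dotProduct_mulVec_of_mul_eq_one {m n R : Type*} [Fintype m] [Fintype n]
    [DecidableEq m] [Semiring R] {P : Matrix m n R} {Q : Matrix n m R} (hPQ : P * Q = 1)
    (u v : m → R) : (u ᵥ* P) ⬝ᵥ (Q *ᵥ v) = u ⬝ᵥ v := by
  rw [← dotProduct_mulVec, mulVec_mulVec, hPQ, one_mulVec]

theorem Function.Odd.finsetSum_eq_zero_of_map_zero {α β : Type*} [AddGroup α]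
    [IsAddTorsionFree α] [AddCommGroup β] {f : α → β} (hf : f.Odd) (hf₀ : f 0 = 0)
    {s : Finset α} (hs : ∀ a ∈ s, -a ∈ s) : ∑ a ∈ s, f a = 0 :=
  Finset.sum_involution (fun a _ => -a) (fun a _ => by rw [hf, add_neg_cancel])
    (fun a _ hfa hneg => hfa (by rw [neg_eq_self.mp hneg, hf₀])) hs (fun a _ => neg_neg a)

theorem Function.even_dotProduct_of_mul_eq_one {α n R : Type*} [InvolutiveNeg α] [Fintype n]
    [DecidableEq n] [Semiring R] {B : α → Matrix n n R} (hB : ∀ k, B k * B (-k) = 1)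
    {u v : α → n → R} (hu : ∀ k, u (-k) ᵥ* B (-k) = u k) (hv : ∀ k, B k *ᵥ v (-k) = v k) :
    Function.Even fun k => u k ⬝ᵥ v k := fun k => by
  have hB' : B (-k) * B k = 1 := by simpa using hB (-k)
  calc u (-k) ⬝ᵥ v (-k) = (u (-k) ᵥ* B (-k)) ⬝ᵥ (B k *ᵥ v (-k)) :=
        (vecMul_dotProduct_mulVec_of_mul_eq_one hB' _ _).symm
    _ = u k ⬝ᵥ v k := by rw [hu, hv]

/-- in `B_R^B` (where `ρ = id`), the odd Hamiltonians vanish: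
`H^(2n+1) = ∑_{k∈K} k^(2n+1) ã†(k)·ã(k) = 0`, for a sign-symmetric finite set
`K` of spectral parameters. -/
theorem odd_hamiltonians_vanish {N : ℕ} {A : Type*} [Ring A] [Algebra ℂ A]
    (K : Finset ℝ) (hK : ∀ k ∈ K, -k ∈ K)
    (ta tadag : Fin N → ℝ → A) (b : Fin N → Fin N → ℝ → A)
    (hbb : ∀ k : ℝ, bmat b k * bmat b (-k) = 1)
    (hrho1 : ∀ (i : Fin N) (k : ℝ),
      ∑ j : Fin N, tadag j (-k) * b j i (-k) = tadag i k)
    (hrho2 : ∀ (i : Fin N) (k : ℝ),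
      ∑ j : Fin N, b i j k * ta j (-k) = ta i k) :
    ∀ n : ℕ, Ham K (2 * n + 1) ta tadag = 0 := by
  intro n
  have hcontraction : Function.Even fun k => ∑ i, tadag i k * ta i k :=
    Function.even_dotProduct_of_mul_eq_one (B := bmat b) (u := fun k i => tadag i k)
      (v := fun k i => ta i k) hbb (fun k => funext fun i => hrho1 i k)
      (fun k => funext fun i => hrho2 i k)
  have hweight : Function.Odd fun k : ℝ => (k : ℂ) ^ (2 * n + 1) := fun k => by
    push_cast
    exact Odd.neg_pow ⟨n, rfl⟩ _
  exact (hweight.smul_even hcontraction).finsetSum_eq_zero_of_map_zero (by simp) hK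
end

section
/- Under the boundary algebra relations (discretized), the even Hamiltonians H^(2n) := ∑_{k∈K} k^(2n) ã†(k)·ã(k) satisfy [H^(2n), ã†(p)] = p^(2n) ã†(p) and [H^(2n), ã(p)] = −p^(2n) ã(p) for each p ∈ K. -/
/-!
Write `𝒩(k) = ∑ᵢ ã†ᵢ(k) ãᵢ(k)`, so that `H^(m) = ∑_{k ∈ K} k^m 𝒩(k)`. Moving `ã(k)` past `ã†(p)`
with the mixed relation produces an `R`-twisted product `ã†(k) ã†(p)`, which the inverse of the
`ã†ã†` exchange relation (available by unitarity `R₁₂ R₂₁ = I`) turns back into `ã†(p) ã†(k)`.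
The two contact terms give `½ δ_{k,p} ã†(p)` and, through `ã†(−p) b(−p) = ã†(p)`,
`½ δ_{k,−p} ã†(p)`. Hence `[𝒩(k), ã†(p)] = ½ (δ_{k,p} + δ_{k,−p}) ã†(p)`, and in the same way
`[𝒩(k), ã(p)] = −½ (δ_{k,p} + δ_{k,−p}) ã(p)`. Since `k^(2n)` takes the same value at `±p` and
`K` contains both, summing over `K` gives the eigenvalue `p^(2n)`.
-/

open Matrix

theorem sum_mul_swap_eq_ite_of_unitarity {N : ℕ} {R : ℝ → ℝ → TwoLeg N ℂ}
    (hunit : ∀ k₁ k₂ : ℝ, R k₁ k₂ * flipM (R k₂ k₁) = 1) (k₁ k₂ : ℝ) (a c : Fin N × Fin N) :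
    ∑ q, R k₁ k₂ a q * R k₂ k₁ q.swap c = if a = c.swap then 1 else 0 := by
  simpa [Matrix.mul_apply, flipM, Matrix.one_apply, Prod.swap] using
    congrFun (congrFun (hunit k₁ k₂) a) c.swap

theorem sum_smul_sum_smul {ι κ S M : Type*} [Fintype ι] [Fintype κ] [CommSemiring S]
    [AddCommMonoid M] [Module S M] (c : ι → S) (d : ι → κ → S) (v : κ → M) :
    ∑ x, c x • ∑ y, d x y • v y = ∑ y, (∑ x, c x * d x y) • v y := by
  simp_rw [Finset.smul_sum, smul_smul, Finset.sum_smul]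
  exact Finset.sum_comm

theorem lie_sum_smul_of_lie_eq_smul {ι S A : Type*} [CommSemiring S] [Ring A] [Algebra S A]
    {s : Finset ι} {X : ι → A} {x : A} {c : ι → S} (h : ∀ k ∈ s, ⁅X k, x⁆ = c k • x)
    (w : ι → S) : ⁅∑ k ∈ s, w k • X k, x⁆ = (∑ k ∈ s, w k * c k) • x := by
  simp_rw [Ring.lie_def, Finset.sum_mul, Finset.mul_sum, ← Finset.sum_sub_distrib, smul_mul_assoc,
    mul_smul_comm, ← smul_sub, Finset.sum_smul, mul_smul]
  exact Finset.sum_congr rfl fun k hk => by rw [← Ring.lie_def, h k hk]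

noncomputable def symmDelta (k p : ℝ) : ℂ :=
  2⁻¹ * (if k = p then 1 else 0) + 2⁻¹ * (if k = -p then 1 else 0)

theorem sum_mul_symmDelta {K : Finset ℝ} {p : ℝ} (hp : p ∈ K) (hp' : -p ∈ K) {f : ℝ → ℂ}
    (hf : f (-p) = f p) : ∑ k ∈ K, f k * symmDelta k p = f p := by
  simp_rw [symmDelta, mul_add, mul_ite, mul_one, mul_zero, Finset.sum_add_distrib,
    Finset.sum_ite_eq', if_pos hp, if_pos hp', hf]
  ring

def numberOp {N : ℕ} {A : Type*} [Ring A] (ta tadag : Fin N → ℝ → A) (k : ℝ) : A :=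
  ∑ i, tadag i k * ta i k

theorem Ham_eq_sum_smul_numberOp {N : ℕ} {A : Type*} [Ring A] [Algebra ℂ A] (K : Finset ℝ) (m : ℕ)
    (ta tadag : Fin N → ℝ → A) :
    Ham K m ta tadag = ∑ k ∈ K, ((k : ℂ) ^ m) • numberOp ta tadag k :=
  rfl

section BoundaryAlgebra

variable {N : ℕ} {A : Type*} [Ring A] [Algebra ℂ A] {R : ℝ → ℝ → TwoLeg N ℂ}
  {ta tadag : Fin N → ℝ → A}

theorem sum_smul_tadag_mul_tadag
    (hunit : ∀ k₁ k₂ : ℝ, R k₁ k₂ * flipM (R k₂ k₁) = 1)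
    (hadad : ∀ (k₁ k₂ : ℝ) (i j : Fin N),
      tadag i k₁ * tadag j k₂ =
        ∑ i' : Fin N, ∑ j' : Fin N,
          R k₂ k₁ (j', i') (j, i) • (tadag j' k₂ * tadag i' k₁))
    (k p : ℝ) (c : Fin N × Fin N) :
    ∑ q : Fin N × Fin N, R k p q c • (tadag q.1 k * tadag q.2 p) = tadag c.2 p * tadag c.1 k := by
  have hpair : ∀ q : Fin N × Fin N, tadag q.1 k * tadag q.2 p =
      ∑ r : Fin N × Fin N, R p k r q.swap • (tadag r.1 p * tadag r.2 k) := by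
    intro q
    rw [hadad, Fintype.sum_prod_type, Finset.sum_comm]
    rfl
  have hcontract : ∀ r : Fin N × Fin N,
      ∑ q, R k p q c * R p k r q.swap = if r = c.swap then 1 else 0 := by
    intro r
    rw [← sum_mul_swap_eq_ite_of_unitarity hunit p k r c]
    exact Fintype.sum_equiv (Equiv.prodComm _ _) _ _ fun q => mul_comm _ _
  simp_rw [hpair, sum_smul_sum_smul, hcontract, ite_smul, one_smul, zero_smul, Finset.sum_ite_eq']
  simp

theorem sum_smul_ta_mul_ta
    (hunit : ∀ k₁ k₂ : ℝ, R k₁ k₂ * flipM (R k₂ k₁) = 1)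
    (haa : ∀ (k₁ k₂ : ℝ) (i j : Fin N),
      ta i k₁ * ta j k₂ =
        ∑ i' : Fin N, ∑ j' : Fin N,
          R k₂ k₁ (j, i) (j', i') • (ta j' k₂ * ta i' k₁))
    (p k : ℝ) (a : Fin N × Fin N) :
    ∑ q : Fin N × Fin N, R p k a q • (ta q.1 p * ta q.2 k) = ta a.2 k * ta a.1 p := by
  have hpair : ∀ q : Fin N × Fin N, ta q.1 p * ta q.2 k =
      ∑ r : Fin N × Fin N, R k p q.swap r • (ta r.1 k * ta r.2 p) := by
    intro q
    rw [haa, Fintype.sum_prod_type, Finset.sum_comm]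
    rfl
  simp_rw [hpair, sum_smul_sum_smul, sum_mul_swap_eq_ite_of_unitarity hunit,
    ← Prod.swap_eq_iff_eq_swap, eq_comm (a := a.swap), ite_smul, one_smul, zero_smul, Finset.sum_ite_eq']
  simp

theorem lie_numberOp_tadag {b : Fin N → Fin N → ℝ → A}
    (hunit : ∀ k₁ k₂ : ℝ, R k₁ k₂ * flipM (R k₂ k₁) = 1)
    (hadad : ∀ (k₁ k₂ : ℝ) (i j : Fin N),
      tadag i k₁ * tadag j k₂ =
        ∑ i' : Fin N, ∑ j' : Fin N,
          R k₂ k₁ (j', i') (j, i) • (tadag j' k₂ * tadag i' k₁))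
    (haad : ∀ (k₁ k₂ : ℝ) (i j : Fin N),
      ta i k₁ * tadag j k₂ =
        (∑ i' : Fin N, ∑ j' : Fin N,
          R k₁ k₂ (i, j') (i', j) • (tadag j' k₂ * ta i' k₁)) +
        ((2 : ℂ)⁻¹) • (if k₁ = k₂ ∧ i = j then (1 : A) else 0) +
        ((2 : ℂ)⁻¹) • (if k₁ = -k₂ then b i j k₁ else 0))
    (hrho1 : ∀ (i : Fin N) (k : ℝ),
      ∑ j : Fin N, tadag j (-k) * b j i (-k) = tadag i k)
    (k p : ℝ) (j : Fin N) :
    ⁅numberOp ta tadag k, tadag j p⁆ = symmDelta k p • tadag j p := by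
  have hexchange : ∑ i, tadag i k * ∑ i', ∑ j', R k p (i, j') (i', j) • (tadag j' p * ta i' k)
      = tadag j p * numberOp ta tadag k := by
    calc _ = ∑ i', (∑ q : Fin N × Fin N, R k p q (i', j) • (tadag q.1 k * tadag q.2 p)) *
          ta i' k := by
          simp_rw [Finset.mul_sum, Finset.sum_mul, mul_smul_comm, smul_mul_assoc, mul_assoc,
            Fintype.sum_prod_type]
          exact Finset.sum_comm
      _ = _ := by
          simp_rw [sum_smul_tadag_mul_tadag hunit hadad, mul_assoc, numberOp, Finset.mul_sum]
  have hdelta : ∑ i, tadag i k * ((2 : ℂ)⁻¹ • if k = p ∧ i = j then (1 : A) else 0)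
      = ((2 : ℂ)⁻¹ * if k = p then 1 else 0) • tadag j p := by
    by_cases h : k = p <;> simp [h]
  have hreflect : ∑ i, tadag i k * ((2 : ℂ)⁻¹ • if k = -p then b i j k else 0)
      = ((2 : ℂ)⁻¹ * if k = -p then 1 else 0) • tadag j p := by
    by_cases h : k = -p
    · simp [h, ← Finset.smul_sum, hrho1]
    · simp [h]
  rw [Ring.lie_def, sub_eq_iff_eq_add']
  nth_rw 1 [numberOp]
  simp_rw [Finset.sum_mul, mul_assoc, haad, mul_add, Finset.sum_add_distrib, hexchange, hdelta,
    hreflect, symmDelta, add_smul, add_assoc]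

theorem lie_numberOp_ta {b : Fin N → Fin N → ℝ → A}
    (hunit : ∀ k₁ k₂ : ℝ, R k₁ k₂ * flipM (R k₂ k₁) = 1)
    (haa : ∀ (k₁ k₂ : ℝ) (i j : Fin N),
      ta i k₁ * ta j k₂ =
        ∑ i' : Fin N, ∑ j' : Fin N,
          R k₂ k₁ (j, i) (j', i') • (ta j' k₂ * ta i' k₁))
    (haad : ∀ (k₁ k₂ : ℝ) (i j : Fin N),
      ta i k₁ * tadag j k₂ =
        (∑ i' : Fin N, ∑ j' : Fin N,
          R k₁ k₂ (i, j') (i', j) • (tadag j' k₂ * ta i' k₁)) +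
        ((2 : ℂ)⁻¹) • (if k₁ = k₂ ∧ i = j then (1 : A) else 0) +
        ((2 : ℂ)⁻¹) • (if k₁ = -k₂ then b i j k₁ else 0))
    (hrho2 : ∀ (i : Fin N) (k : ℝ),
      ∑ j : Fin N, b i j k * ta j (-k) = ta i k)
    (k p : ℝ) (j : Fin N) :
    ⁅numberOp ta tadag k, ta j p⁆ = -symmDelta k p • ta j p := by
  have hexchange : ∑ i, (∑ i', ∑ j', R p k (j, j') (i', i) • (tadag j' k * ta i' p)) * ta i k
      = numberOp ta tadag k * ta j p := by
    calc _ = ∑ j', tadag j' k * ∑ q : Fin N × Fin N, R p k (j, j') q • (ta q.1 p * ta q.2 k) := by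
          simp_rw [Finset.mul_sum, Finset.sum_mul, mul_smul_comm, smul_mul_assoc, mul_assoc,
            Fintype.sum_prod_type_right]
          exact (Finset.sum_congr rfl fun _ _ => Finset.sum_comm).trans Finset.sum_comm
      _ = _ := by simp_rw [sum_smul_ta_mul_ta hunit haa, ← mul_assoc, numberOp, Finset.sum_mul]
  have hdelta : ∑ i, ((2 : ℂ)⁻¹ • if p = k ∧ j = i then (1 : A) else 0) * ta i k
      = ((2 : ℂ)⁻¹ * if k = p then 1 else 0) • ta j p := by
    by_cases h : k = p <;> simp [h, eq_comm (a := p)]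
  have hreflect : ∑ i, ((2 : ℂ)⁻¹ • if p = -k then b j i p else 0) * ta i k
      = ((2 : ℂ)⁻¹ * if k = -p then 1 else 0) • ta j p := by
    by_cases h : k = -p
    · simp [h, ← Finset.smul_sum, hrho2]
    · simp [h, neg_eq_iff_eq_neg.not.mp (Ne.symm h)]
  rw [neg_smul, Ring.lie_def, ← neg_sub, neg_inj, sub_eq_iff_eq_add']
  nth_rw 1 [numberOp]
  simp_rw [Finset.mul_sum, ← mul_assoc, haad, add_mul, Finset.sum_add_distrib, hexchange, hdelta,
    hreflect, symmDelta, add_smul, add_assoc]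

end BoundaryAlgebra

/-- under the (discretized) boundary algebra relations, the even
Hamiltonians satisfy `[H^(2n), ã†(p)] = p^(2n) ã†(p)` and
`[H^(2n), ã(p)] = −p^(2n) ã(p)` for each `p ∈ K`. -/
theorem even_hamiltonian_commutators {N : ℕ} {A : Type*} [Ring A] [Algebra ℂ A]
    (R : ℝ → ℝ → TwoLeg N ℂ)
    (K : Finset ℝ) (hK : ∀ k ∈ K, -k ∈ K)
    (ta tadag : Fin N → ℝ → A) (b : Fin N → Fin N → ℝ → A)
    (hunit : ∀ k₁ k₂ : ℝ, R k₁ k₂ * flipM (R k₂ k₁) = 1)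
    (haa : ∀ (k₁ k₂ : ℝ) (i j : Fin N),
      ta i k₁ * ta j k₂ =
        ∑ i' : Fin N, ∑ j' : Fin N,
          R k₂ k₁ (j, i) (j', i') • (ta j' k₂ * ta i' k₁))
    (hadad : ∀ (k₁ k₂ : ℝ) (i j : Fin N),
      tadag i k₁ * tadag j k₂ =
        ∑ i' : Fin N, ∑ j' : Fin N,
          R k₂ k₁ (j', i') (j, i) • (tadag j' k₂ * tadag i' k₁))
    (haad : ∀ (k₁ k₂ : ℝ) (i j : Fin N),
      ta i k₁ * tadag j k₂ =
        (∑ i' : Fin N, ∑ j' : Fin N,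
          R k₁ k₂ (i, j') (i', j) • (tadag j' k₂ * ta i' k₁)) +
        ((2 : ℂ)⁻¹) • (if k₁ = k₂ ∧ i = j then (1 : A) else 0) +
        ((2 : ℂ)⁻¹) • (if k₁ = -k₂ then b i j k₁ else 0))
    (hrho1 : ∀ (i : Fin N) (k : ℝ),
      ∑ j : Fin N, tadag j (-k) * b j i (-k) = tadag i k)
    (hrho2 : ∀ (i : Fin N) (k : ℝ),
      ∑ j : Fin N, b i j k * ta j (-k) = ta i k) :
    ∀ n : ℕ, ∀ p ∈ K, ∀ i : Fin N,
      (Ham K (2 * n) ta tadag * tadag i p - tadag i p * Ham K (2 * n) ta tadag =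
        ((p : ℂ) ^ (2 * n)) • tadag i p) ∧
      (Ham K (2 * n) ta tadag * ta i p - ta i p * Ham K (2 * n) ta tadag =
        -(((p : ℂ) ^ (2 * n)) • ta i p)) := by
  intro n p hp j
  have hweight : ∑ k ∈ K, (k : ℂ) ^ (2 * n) * symmDelta k p = (p : ℂ) ^ (2 * n) :=
    sum_mul_symmDelta hp (hK p hp) (by push_cast; exact (even_two_mul n).neg_pow _)
  rw [← Ring.lie_def, ← Ring.lie_def, Ham_eq_sum_smul_numberOp]
  constructor
  · rw [lie_sum_smul_of_lie_eq_smul fun k _ => lie_numberOp_tadag hunit hadad haad hrho1 k p j,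
      hweight]
  · rw [lie_sum_smul_of_lie_eq_smul fun k _ => lie_numberOp_ta hunit haa haad hrho2 k p j]
    simp_rw [mul_neg, Finset.sum_neg_distrib, hweight, neg_smul]
end

section
/- For the Yangian R-matrix R(k) = (k I + ig P)/(k + ig), the constant diagonal matrices B(k) = diag(ε₁,…,ε_N) with εᵢ ∈ {+1,−1} satisfy both the reflection equation R₁₂(k₁−k₂) B₁ R₂₁(k₂+k₁) B₂ = B₂ R₁₂(k₁+k₂) B₁ R₂₁(−k₂+k₁) and the unitarity condition B(k)B(−k) = I. -/
/-!
Write `R(k) = x₀ + x₁ P` with scalar coefficients, and `B₁ = B ⊗ I`, `B₂ = I ⊗ B`. Expanding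
both sides of the reflection equation, the relations `P² = 1`, `P B₁ = B₂ P`, `B₁ B₂ = B₂ B₁` and
`B² = 1` identify the four monomials term by term: `B₁ P B₂ = P = B₂ P B₁`, `P B₁ B₂ = B₂ B₁ P`
and `P B₁ P B₂ = 1 = B₂ P B₁ P`. Moreover `flipM` fixes `R(k)`, since it fixes both `1` and `P`.
-/

open Matrix

section ReflectionAlgebra

variable {K A : Type*} [CommSemiring K] [Semiring A] [Algebra K A] {P B₁ B₂ : A}

theorem reflection_eq_of_flip (hP : P * P = 1) (hB : B₁ * B₂ = B₂ * B₁)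
    (hPB₁ : P * B₁ = B₂ * P) (hB₂ : B₂ * B₂ = 1) (x₀ x₁ y₀ y₁ : K) :
    (x₀ • 1 + x₁ • P) * B₁ * (y₀ • 1 + y₁ • P) * B₂ =
      B₂ * (y₀ • 1 + y₁ • P) * B₁ * (x₀ • 1 + x₁ • P) := by
  have hPB₂ : P * B₂ = B₁ * P := by
    calc P * B₂ = P * (B₂ * P) * P := by rw [mul_assoc, mul_assoc, hP, mul_one]
      _ = P * P * B₁ * P := by rw [← hPB₁, mul_assoc P P]
      _ = B₁ * P := by rw [hP, one_mul]
  have hB₁PB₂ : B₁ * P * B₂ = P := by rw [← hPB₂, mul_assoc, hB₂, mul_one]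
  have hB₂PB₁ : B₂ * P * B₁ = P := by rw [mul_assoc, hPB₁, ← mul_assoc, hB₂, one_mul]
  have hPB₁B₂ : P * B₁ * B₂ = B₂ * B₁ * P := by rw [hPB₁, mul_assoc, hPB₂, mul_assoc]
  have hPB₁PB₂ : P * B₁ * P * B₂ = 1 := by rw [hPB₁, mul_assoc B₂, hP, mul_one, hB₂]
  simp only [add_mul, mul_add, smul_mul_assoc, mul_smul_comm, one_mul, mul_one]
  rw [hB₁PB₂, hB₂PB₁, hPB₁B₂, hPB₁PB₂, hP, hB]
  module

end ReflectionAlgebra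

open scoped Kronecker

theorem leg1_eq_kronecker {N : ℕ} {α : Type*} [MulZeroOneClass α] (M : Matrix (Fin N) (Fin N) α) :
    leg1 M = M ⊗ₖ 1 := by
  ext p q
  simp [leg1, one_apply]

theorem leg2_eq_kronecker {N : ℕ} {α : Type*} [MulZeroOneClass α] (M : Matrix (Fin N) (Fin N) α) :
    leg2 M = 1 ⊗ₖ M := by
  ext p q
  simp [leg2, one_apply]

theorem Pmat_eq_toMatrix (N : ℕ) :
    Pmat N = (Equiv.prodComm (Fin N) (Fin N)).toPEquiv.toMatrix := by
  ext p q
  simp [Pmat, PEquiv.toMatrix_apply, Prod.ext_iff, eq_comm, and_comm]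

theorem Pmat_mul_self (N : ℕ) : Pmat N * Pmat N = 1 := by
  rw [Pmat_eq_toMatrix, PEquiv.toMatrix_toPEquiv_mul]
  ext p q
  simp [PEquiv.toMatrix_apply, one_apply]

theorem Pmat_mul_kronecker {N : ℕ} (A B : Matrix (Fin N) (Fin N) ℂ) :
    Pmat N * (A ⊗ₖ B) = (B ⊗ₖ A) * Pmat N := by
  rw [Pmat_eq_toMatrix, PEquiv.toMatrix_toPEquiv_mul, PEquiv.mul_toMatrix_toPEquiv]
  ext p q
  simp [mul_comm]

theorem flipM_Ryang {N : ℕ} (g : ℝ) (k : ℂ) : flipM (Ryang N g k) = Ryang N g k := by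
  ext p q
  simp [flipM, Ryang, Pmat, one_apply, Prod.ext_iff, and_comm]

theorem Ryang_eq_smul_add_smul (N : ℕ) (g : ℝ) (k : ℂ) :
    Ryang N g k =
      ((k + Complex.I * g)⁻¹ * k) • 1 + ((k + Complex.I * g)⁻¹ * (Complex.I * g)) • Pmat N := by
  rw [Ryang, smul_add, smul_smul, smul_smul]

theorem diagonal_mul_self_eq_one {n α : Type*} [Fintype n] [DecidableEq n] [Ring α] {ε : n → α}
    (hε : ∀ i, ε i = 1 ∨ ε i = -1) : diagonal ε * diagonal ε = 1 := by
  rw [diagonal_mul_diagonal, ← diagonal_one]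
  congr 1
  ext i
  rcases hε i with h | h <;> simp [h]

theorem diagonal_reflection_matrices_general {N : ℕ} (g : ℝ) (k₁ k₂ : ℂ)
    (ε : Fin N → ℂ) (hε : ∀ i, ε i = 1 ∨ ε i = -1) :
    (Ryang N g (k₁ - k₂) * leg1 (Matrix.diagonal ε) *
        flipM (Ryang N g (k₂ + k₁)) * leg2 (Matrix.diagonal ε) =
      leg2 (Matrix.diagonal ε) * Ryang N g (k₁ + k₂) *
        leg1 (Matrix.diagonal ε) * flipM (Ryang N g (k₁ - k₂))) ∧
    Matrix.diagonal ε * Matrix.diagonal ε = 1 := by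
  have hB := diagonal_mul_self_eq_one hε
  refine ⟨?_, hB⟩
  rw [flipM_Ryang, flipM_Ryang, add_comm k₂, leg1_eq_kronecker, leg2_eq_kronecker,
    Ryang_eq_smul_add_smul, Ryang_eq_smul_add_smul]
  apply reflection_eq_of_flip (Pmat_mul_self N)
  · rw [← mul_kronecker_mul, ← mul_kronecker_mul, one_mul, mul_one]
  · exact Pmat_mul_kronecker _ _
  · rw [← mul_kronecker_mul, one_mul, hB, one_kronecker_one]

/-- for the Yangian R-matrix, the constant diagonal matrices
`B = diag(ε₁,…,ε_N)` with `εᵢ = ±1` satisfy the reflection equation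
`R₁₂(k₁−k₂) B₁ R₂₁(k₂+k₁) B₂ = B₂ R₁₂(k₁+k₂) B₁ R₂₁(k₁−k₂)` and the unitarity
condition `B(k)B(−k) = B² = 1`. -/
theorem diagonal_reflection_matrices {N : ℕ} (g : ℝ) (k₁ k₂ : ℂ)
    (h1 : (k₁ - k₂) + Complex.I * g ≠ 0)
    (h2 : (k₁ + k₂) + Complex.I * g ≠ 0)
    (ε : Fin N → ℂ) (hε : ∀ i, ε i = 1 ∨ ε i = -1) :
    (Ryang N g (k₁ - k₂) * leg1 (Matrix.diagonal ε) *
        flipM (Ryang N g (k₂ + k₁)) * leg2 (Matrix.diagonal ε) =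
      leg2 (Matrix.diagonal ε) * Ryang N g (k₁ + k₂) *
        leg1 (Matrix.diagonal ε) * flipM (Ryang N g (k₁ - k₂))) ∧
    Matrix.diagonal ε * Matrix.diagonal ε = 1 :=
  diagonal_reflection_matrices_general g k₁ k₂ ε hε
end
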